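/- arXiv:2311.13327 — 6 statements merged into one kernel-verified Lean document; each statement's English description precedes it below -/
import Mathlib

section
/- Let (Ω, 𝓐, μ) be a probability space, Z : Ω → ℝᵏ and X : Ω → ℝ measurable, and β ∈ (0,1). Let v : ℝᵏ × ℝᵖ → ℝ be measurable such that for every z the map θ ↦ v(z,θ) is differentiable on ℝᵖ with ‖∇_θ v(z,θ)‖ ≤ V₁(z) for all θ, where V₁ is measurable with E[V₁(Z)] < ∞. Suppose g(θ) := E[S^VaR(v(Z,θ), X)] is finite for some (hence every) θ, and fix θ₀ with μ(X = v(Z,θ₀)) = 0. Then g is (Fréchet) differentiable at θ₀ with gradient ∇g(θ₀) = E[(1{X ≤ v(Z,θ₀)} − β)·∇_θ v(Z,θ₀)]. -/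
open MeasureTheory

/-- The VaR (pinball) loss `S^VaR(v,x) = (1{x ≤ v} − β)·(v − x)`. -/
noncomputable def SVaR (β v x : ℝ) : ℝ := ((if x ≤ v then (1 : ℝ) else 0) - β) * (v - x)

/-!
Off the null tie set `{X = v(Z,θ₀)}`, the loss `θ ↦ S^VaR(v(Z,θ), X)` agrees near `θ₀` with the
smooth function `(1{X ≤ v(Z,θ₀)} − β)(v(Z,θ) − X)`, so it is almost surely differentiable at `θ₀`.
The pinball loss is 1-Lipschitz in its first argument and, by the mean value inequality, `v(z,·)`
is `V₁(z)`-Lipschitz, so the integrand is Lipschitz in `θ` with the integrable constant `V₁(Z)`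
and one may differentiate under the integral. The gradient `ω ↦ ∇v(Z ω, θ₀)` is measurable as a
pointwise limit of difference quotients.
-/

open Filter Topology

theorem lipschitzWith_svar {β : ℝ} (hβ : β ∈ Set.Icc (0 : ℝ) 1) (x : ℝ) :
    LipschitzWith 1 (fun v => SVaR β v x) := by
  refine LipschitzWith.of_dist_le_mul fun a b => ?_
  obtain ⟨hβ0, hβ1⟩ := hβ
  rw [Real.dist_eq, Real.dist_eq, NNReal.coe_one, one_mul, abs_le]
  have h₁ := le_abs_self (a - b)
  have h₂ := neg_abs_le (a - b)
  unfold SVaR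
  split_ifs <;> constructor <;> nlinarith

theorem hasDerivAt_svar {β v x : ℝ} (h : x ≠ v) :
    HasDerivAt (fun a => SVaR β a x) ((if x ≤ v then 1 else 0) - β) v := by
  have hlocal : ∀ᶠ a in 𝓝 v, (x ≤ a ↔ x ≤ v) := by
    rcases h.lt_or_gt with h | h
    · filter_upwards [eventually_gt_nhds h] with a ha using iff_of_true ha.le h.le
    · filter_upwards [eventually_lt_nhds h] with a ha using iff_of_false ha.not_ge h.not_ge
  have hlin : HasDerivAt (fun a => ((if x ≤ v then 1 else 0) - β) * (a - x))
      ((if x ≤ v then 1 else 0) - β) v := by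
    simpa using ((hasDerivAt_id v).sub_const x).const_mul ((if x ≤ v then 1 else 0) - β)
  refine hlin.congr_of_eventuallyEq ?_
  filter_upwards [hlocal] with a ha
  simp only [SVaR, ha]

theorem Measurable.svar {α : Type*} [MeasurableSpace α] {f g : α → ℝ} (hf : Measurable f)
    (hg : Measurable g) (β : ℝ) : Measurable fun a => SVaR β (f a) (g a) :=
  ((Measurable.ite (measurableSet_le hg hf) measurable_const measurable_const).sub_const β).mul
    (hf.sub hg)

section Gradient

variable {E : Type*} [NormedAddCommGroup E] [InnerProductSpace ℝ E]

theorem HasDerivAt.comp_hasGradientAt [CompleteSpace E] {h : ℝ → ℝ} {h' : ℝ} {f : E → ℝ}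
    {f' x : E} (hh : HasDerivAt h h' (f x)) (hf : HasGradientAt f f' x) :
    HasGradientAt (h ∘ f) (h' • f') x := by
  rw [hasGradientAt_iff_hasFDerivAt, map_smulₛₗ, RCLike.conj_to_real]
  exact hh.comp_hasFDerivAt x hf.hasFDerivAt

theorem lipschitzWith_of_hasGradientAt [CompleteSpace E] {f : E → ℝ} {f' : E → E} {C : NNReal}
    (hf : ∀ x, HasGradientAt f (f' x) x) (bound : ∀ x, ‖f' x‖ ≤ C) : LipschitzWith C f :=
  lipschitzWith_of_nnnorm_fderiv_le (fun x => (hf x).differentiableAt) fun x => by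
    rw [(hf x).hasFDerivAt.fderiv, LinearIsometryEquiv.nnnorm_map, ← NNReal.coe_le_coe,
      coe_nnnorm]
    exact bound x

theorem measurable_of_forall_hasGradientAt [FiniteDimensional ℝ E] [MeasurableSpace E]
    [BorelSpace E] {α : Type*} [MeasurableSpace α] {f : α → E → ℝ} {g : α → E} {x : E}
    (hf : ∀ y, Measurable fun a => f a y) (hg : ∀ a, HasGradientAt (f a) (g a) x) :
    Measurable g := by
  have hinner : ∀ y, Measurable fun a => inner ℝ (g a) y := fun y =>
    measurable_of_tendsto_metrizable
      (f := fun (n : ℕ) a => (n : ℝ) • (f a (x + (n : ℝ)⁻¹ • y) - f a x))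
      (fun n => ((hf _).fun_sub (hf x)).const_smul (n : ℝ))
      (tendsto_pi_nhds.2 fun a => (hg a).hasFDerivAt.lim y
        (tendsto_norm_atTop_atTop.comp tendsto_natCast_atTop_atTop))
  let b := stdOrthonormalBasis ℝ E
  have hrepr : g = fun a => ∑ i, inner ℝ (g a) (b i) • b i :=
    funext fun a => by simpa only [real_inner_comm] using (b.sum_repr' (g a)).symm
  rw [hrepr]
  exact Finset.measurable_sum _ fun i _ => (hinner (b i)).smul_const (b i)

theorem hasGradientAt_integral_of_dominated_loc_of_lip [CompleteSpace E] {α : Type*}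
    [MeasurableSpace α] {μ : Measure α} {F : E → α → ℝ} {F' : α → E} {x₀ : E} {s : Set E}
    {bound : α → ℝ} (hs : s ∈ 𝓝 x₀) (hF_meas : ∀ᶠ x in 𝓝 x₀, AEStronglyMeasurable (F x) μ)
    (hF_int : Integrable (F x₀) μ) (hF'_meas : AEStronglyMeasurable F' μ)
    (h_lip : ∀ᵐ a ∂μ, LipschitzOnWith (Real.nnabs (bound a)) (F · a) s)
    (bound_integrable : Integrable bound μ)
    (h_diff : ∀ᵐ a ∂μ, HasGradientAt (F · a) (F' a) x₀) :
    HasGradientAt (fun x => ∫ a, F x a ∂μ) (∫ a, F' a ∂μ) x₀ := by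
  obtain ⟨hint, hderiv⟩ := hasFDerivAt_integral_of_dominated_loc_of_lip
    (F' := fun a => InnerProductSpace.toDual ℝ E (F' a)) hs hF_meas hF_int
    ((InnerProductSpace.toDual ℝ E).continuous.comp_aestronglyMeasurable hF'_meas) h_lip
    bound_integrable h_diff
  have hF'_int : Integrable F' μ := hint.norm.mono' hF'_meas (ae_of_all _ fun a => by simp)
  have hcomm := ContinuousLinearMap.integral_comp_commSL (by simp)
    (InnerProductSpace.toDual ℝ E).toContinuousLinearEquiv.toContinuousLinearMap hF'_int
  simp only [ContinuousLinearEquiv.coe_coe,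
    LinearIsometryEquiv.coe_toContinuousLinearEquiv] at hcomm
  rwa [hasGradientAt_iff_hasFDerivAt, ← hcomm]

end Gradient

theorem MeasureTheory.Integrable.of_lipschitzWith_param {α E G : Type*} [MeasurableSpace α]
    {μ : Measure α} [PseudoMetricSpace E] [NormedAddCommGroup G] {F : E → α → G}
    {bound : α → ℝ} {x y : E}
    (hy : Integrable (F y) μ) (hx : AEStronglyMeasurable (F x) μ) (hbound : Integrable bound μ)
    (hlip : ∀ᵐ a ∂μ, LipschitzWith (Real.nnabs (bound a)) (F · a)) : Integrable (F x) μ := by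
  refine (hy.norm.add (hbound.abs.mul_const (dist x y))).mono' hx (hlip.mono fun a ha => ?_)
  calc ‖F x a‖ ≤ ‖F y a‖ + dist (F x a) (F y a) := by
        rw [dist_eq_norm]; exact norm_le_norm_add_norm_sub' _ _
    _ ≤ ‖F y a‖ + |bound a| * dist x y := by
        gcongr; simpa only [Real.coe_nnabs] using ha.dist_le_mul x y

theorem pinball_criterion_gradient_general
    {Ω : Type*} [MeasurableSpace Ω] (μ : Measure Ω)
    {k p : ℕ}
    (Z : Ω → EuclideanSpace ℝ (Fin k)) (hZ : Measurable Z)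
    (X : Ω → ℝ) (hX : Measurable X)
    (β : ℝ) (hβ : β ∈ Set.Ioo (0 : ℝ) 1)
    (v : EuclideanSpace ℝ (Fin k) → EuclideanSpace ℝ (Fin p) → ℝ)
    (hvmeas : Measurable
      (fun zθ : EuclideanSpace ℝ (Fin k) × EuclideanSpace ℝ (Fin p) => v zθ.1 zθ.2))
    (gv : EuclideanSpace ℝ (Fin k) → EuclideanSpace ℝ (Fin p) → EuclideanSpace ℝ (Fin p))
    (hdiff : ∀ z θ, HasGradientAt (v z) (gv z θ) θ)
    (V₁ : EuclideanSpace ℝ (Fin k) → ℝ)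
    (hgv : ∀ z θ, ‖gv z θ‖ ≤ V₁ z)
    (hV₁int : Integrable (fun ω => V₁ (Z ω)) μ)
    (hfin : ∃ θ₁ : EuclideanSpace ℝ (Fin p),
      Integrable (fun ω => SVaR β (v (Z ω) θ₁) (X ω)) μ)
    (θ₀ : EuclideanSpace ℝ (Fin p))
    (hties : μ {ω | X ω = v (Z ω) θ₀} = 0) :
    HasGradientAt (fun θ => ∫ ω, SVaR β (v (Z ω) θ) (X ω) ∂μ)
      (∫ ω, ((if X ω ≤ v (Z ω) θ₀ then (1 : ℝ) else 0) - β) • gv (Z ω) θ₀ ∂μ) θ₀ := by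
  obtain ⟨θ₁, hθ₁⟩ := hfin
  have hv : ∀ θ, Measurable fun ω => v (Z ω) θ := fun θ =>
    hvmeas.comp (hZ.prodMk measurable_const)
  have hloss : ∀ θ, Measurable fun ω => SVaR β (v (Z ω) θ) (X ω) := fun θ => (hv θ).svar hX β
  have hlip : ∀ ω, LipschitzWith (Real.nnabs (V₁ (Z ω))) fun θ => SVaR β (v (Z ω) θ) (X ω) :=
    fun ω => by
      have hvlip : LipschitzWith (Real.nnabs (V₁ (Z ω))) (v (Z ω)) :=
        lipschitzWith_of_hasGradientAt (hdiff (Z ω)) fun θ =>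
          (hgv (Z ω) θ).trans ((le_abs_self _).trans_eq (Real.coe_nnabs _).symm)
      simpa only [one_mul, Function.comp_def] using
        (lipschitzWith_svar (Set.Ioo_subset_Icc_self hβ) (X ω)).comp hvlip
  have hgrad : ∀ᵐ ω ∂μ, HasGradientAt (fun θ => SVaR β (v (Z ω) θ) (X ω))
      (((if X ω ≤ v (Z ω) θ₀ then (1 : ℝ) else 0) - β) • gv (Z ω) θ₀) θ₀ := by
    filter_upwards [measure_eq_zero_iff_ae_notMem.1 hties] with ω hω
    exact (hasDerivAt_svar hω).comp_hasGradientAt (hdiff (Z ω) θ₀)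
  have hgv_meas : Measurable fun ω => gv (Z ω) θ₀ :=
    measurable_of_forall_hasGradientAt hv fun ω => hdiff (Z ω) θ₀
  exact hasGradientAt_integral_of_dominated_loc_of_lip (Metric.ball_mem_nhds θ₀ one_pos)
    (.of_forall fun θ => (hloss θ).aestronglyMeasurable)
    (hθ₁.of_lipschitzWith_param (hloss θ₀).aestronglyMeasurable hV₁int (.of_forall hlip))
    (((Measurable.ite (measurableSet_le hX (hv θ₀)) measurable_const measurable_const).sub_const
      β).smul hgv_meas).aestronglyMeasurable
    (.of_forall fun ω => (hlip ω).lipschitzOnWith) hV₁int hgrad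

/-- Differentiation under the expectation for the non-smooth pinball criterion:
if `θ ↦ v(z,θ)` is differentiable with gradient dominated by an integrable `V₁(Z)`,
the expected pinball loss `g(θ) = E[S^VaR(v(Z,θ), X)]` is finite for some `θ`, and
`μ(X = v(Z,θ₀)) = 0`, then `g` is differentiable at `θ₀` with gradient
`E[(1{X ≤ v(Z,θ₀)} − β)·∇_θ v(Z,θ₀)]`. -/
theorem pinball_criterion_gradient
    {Ω : Type*} [MeasurableSpace Ω] (μ : Measure Ω) [IsProbabilityMeasure μ]
    {k p : ℕ}
    (Z : Ω → EuclideanSpace ℝ (Fin k)) (hZ : Measurable Z)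
    (X : Ω → ℝ) (hX : Measurable X)
    (β : ℝ) (hβ : β ∈ Set.Ioo (0 : ℝ) 1)
    (v : EuclideanSpace ℝ (Fin k) → EuclideanSpace ℝ (Fin p) → ℝ)
    (hvmeas : Measurable
      (fun zθ : EuclideanSpace ℝ (Fin k) × EuclideanSpace ℝ (Fin p) => v zθ.1 zθ.2))
    (gv : EuclideanSpace ℝ (Fin k) → EuclideanSpace ℝ (Fin p) → EuclideanSpace ℝ (Fin p))
    (hdiff : ∀ z θ, HasGradientAt (v z) (gv z θ) θ)
    (V₁ : EuclideanSpace ℝ (Fin k) → ℝ) (hV₁meas : Measurable V₁)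
    (hgv : ∀ z θ, ‖gv z θ‖ ≤ V₁ z)
    (hV₁int : Integrable (fun ω => V₁ (Z ω)) μ)
    (hfin : ∃ θ₁ : EuclideanSpace ℝ (Fin p),
      Integrable (fun ω => SVaR β (v (Z ω) θ₁) (X ω)) μ)
    (θ₀ : EuclideanSpace ℝ (Fin p))
    (hties : μ {ω | X ω = v (Z ω) θ₀} = 0) :
    HasGradientAt (fun θ => ∫ ω, SVaR β (v (Z ω) θ) (X ω) ∂μ)
      (∫ ω, ((if X ω ≤ v (Z ω) θ₀ then (1 : ℝ) else 0) - β) • gv (Z ω) θ₀ ∂μ) θ₀ :=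
  pinball_criterion_gradient_general μ Z hZ X hX β hβ v hvmeas gv hdiff V₁ hgv hV₁int hfin θ₀ hties
end

section
/- Let β ∈ (0,1), n, p ∈ ℕ, x₁,…,xₙ ∈ ℝ, and let v₁,…,vₙ : ℝᵖ → ℝ be continuously differentiable. Suppose θ̂ ∈ ℝᵖ is a local minimizer of Sₙ(θ) = Σ_{t=1}^n S^VaR(v_t(θ), x_t). Then for every coordinate j ∈ {1,…,p}, | Σ_{t=1}^n ∂_j v_t(θ̂)·(1{x_t ≤ v_t(θ̂)} − β) | ≤ Σ_{t=1}^n |∂_j v_t(θ̂)|·1{x_t = v_t(θ̂)}, where ∂_j v_t denotes the j-th partial derivative of v_t. -/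
open Filter Topology Set Finset

lemma SVaR_eq_max_sub (β w x : ℝ) : SVaR β w x = max (w - x) 0 - β * (w - x) := by
  unfold SVaR
  split_ifs with h
  · rw [max_eq_left (sub_nonneg.2 h)]; ring
  · rw [max_eq_right (by linarith [not_le.1 h])]; ring

lemma HasDerivAt.hasDerivWithinAt_Ici_max_zero {g : ℝ → ℝ} {d a : ℝ} (hg : HasDerivAt g d a) :
    HasDerivWithinAt (fun s => max (g s) 0)
      (if g a = 0 then max d 0 else if 0 < g a then d else 0) (Ici a) a := by
  rcases lt_trichotomy (g a) 0 with hneg | hzero | hpos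
  · rw [if_neg hneg.ne, if_neg hneg.not_gt]
    have hzero_near : (fun s => max (g s) 0) =ᶠ[𝓝 a] fun _ => 0 :=
      (hg.continuousAt.eventually (gt_mem_nhds hneg)).mono fun s hs => max_eq_right hs.le
    exact ((hasDerivAt_const a 0).congr_of_eventuallyEq hzero_near).hasDerivWithinAt
  · rw [if_pos hzero, ← hasDerivWithinAt_Ioi_iff_Ici,
      hasDerivWithinAt_iff_tendsto_slope' (by simp)]
    have hslope := (hasDerivAt_iff_tendsto_slope.1 hg).mono_left
      (nhdsWithin_mono a fun s hs => ne_of_gt hs)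
    refine (hslope.max tendsto_const_nhds).congr' ?_
    filter_upwards [self_mem_nhdsWithin] with s hs
    rw [slope_def_field, slope_def_field, hzero, max_self, sub_zero, sub_zero,
      ← max_div_div_right (sub_pos.2 hs).le, zero_div]
  · rw [if_neg hpos.ne', if_pos hpos]
    have hg_near : (fun s => max (g s) 0) =ᶠ[𝓝 a] g :=
      (hg.continuousAt.eventually (lt_mem_nhds hpos)).mono fun s hs => max_eq_left hs.le
    exact (hg.congr_of_eventuallyEq hg_near).hasDerivWithinAt

lemma HasDerivAt.hasDerivWithinAt_Ici_SVaR {g : ℝ → ℝ} {d a : ℝ} (hg : HasDerivAt g d a)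
    (β x : ℝ) :
    HasDerivWithinAt (fun s => SVaR β (g s) x)
      ((if x = g a then max d 0 else if x < g a then d else 0) - β * d) (Ici a) a := by
  have h := (hg.sub_const x).hasDerivWithinAt_Ici_max_zero.sub
    ((hg.sub_const x).const_mul β).hasDerivWithinAt
  simp only [sub_eq_zero, sub_pos, eq_comm (a := g a)] at h
  exact h.congr (fun s _ => SVaR_eq_max_sub β (g s) x) (SVaR_eq_max_sub β (g a) x)

lemma pinball_right_deriv_le (β d x w : ℝ) :
    (if x = w then max d 0 else if x < w then d else 0) - β * d
      ≤ d * ((if x ≤ w then 1 else 0) - β) + |d| * (if x = w then 1 else 0) := by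
  rcases lt_trichotomy x w with hlt | rfl | hgt
  · simp only [hlt.ne, hlt, hlt.le, if_true, if_false]
    linarith
  · simp only [if_true, le_refl]
    have hmax : max d 0 ≤ d + |d| :=
      max_le (by linarith [abs_nonneg d]) (by linarith [neg_abs_le d])
    linarith
  · simp only [hgt.ne', hgt.not_gt, hgt.not_ge, if_false]
    linarith

lemma IsLocalMin.hasDerivWithinAt_Ici_nonneg {f : ℝ → ℝ} {a D : ℝ} (h : IsLocalMin f a)
    (hf : HasDerivWithinAt f D (Ici a) a) : 0 ≤ D := by
  have hone : (1 : ℝ) ∈ posTangentConeAt (Ici a) a :=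
    mem_posTangentConeAt_of_segment_subset (segment_subset_Icc (by linarith)
      |>.trans Icc_subset_Ici_self)
  simpa using (h.on (Ici a)).hasFDerivWithinAt_nonneg hf hone

lemma pinball_subgradient_nonneg_of_isLocalMin {ι : Type*} [Fintype ι] {β a : ℝ} {x : ι → ℝ}
    {g : ι → ℝ → ℝ} {d : ι → ℝ} (hg : ∀ t, HasDerivAt (g t) (d t) a)
    (hmin : IsLocalMin (fun s => ∑ t, SVaR β (g t s) (x t)) a) :
    0 ≤ ∑ t, (d t * ((if x t ≤ g t a then 1 else 0) - β)
      + |d t| * (if x t = g t a then 1 else 0)) :=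
  calc 0 ≤ ∑ t, ((if x t = g t a then max (d t) 0 else if x t < g t a then d t else 0)
        - β * d t) :=
        hmin.hasDerivWithinAt_Ici_nonneg
          (HasDerivWithinAt.fun_sum fun t _ => (hg t).hasDerivWithinAt_Ici_SVaR β (x t))
    _ ≤ _ := sum_le_sum fun t _ => pinball_right_deriv_le β (d t) (x t) (g t a)

lemma pinball_directional_subgradient_nonneg_of_isLocalMin {E ι : Type*}
    [NormedAddCommGroup E] [NormedSpace ℝ E] [Fintype ι] {β : ℝ} {x : ι → ℝ} {v : ι → E → ℝ}
    {θ : E} (hv : ∀ t, DifferentiableAt ℝ (v t) θ)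
    (hmin : IsLocalMin (fun θ' => ∑ t, SVaR β (v t θ') (x t)) θ) (e : E) :
    0 ≤ ∑ t, (fderiv ℝ (v t) θ e * ((if x t ≤ v t θ then 1 else 0) - β)
      + |fderiv ℝ (v t) θ e| * (if x t = v t θ then 1 else 0)) := by
  have hline : IsLocalMin (fun s : ℝ => ∑ t, SVaR β (v t (θ + s • e)) (x t)) 0 :=
    IsLocalMin.comp_continuous (f := fun θ' => ∑ t, SVaR β (v t θ') (x t))
      (g := fun s : ℝ => θ + s • e) (b := 0) (by simpa using hmin) (by fun_prop)
  simpa using pinball_subgradient_nonneg_of_isLocalMin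
    (fun t => (hv t).hasFDerivAt.hasLineDerivAt e) hline

theorem pinball_first_order_condition_general
    (β : ℝ) (n p : ℕ)
    (x : Fin n → ℝ) (v : Fin n → EuclideanSpace ℝ (Fin p) → ℝ)
    (hv : ∀ t, ContDiff ℝ 1 (v t))
    (θ : EuclideanSpace ℝ (Fin p))
    (hmin : IsLocalMin (fun θ' => ∑ t, SVaR β (v t θ') (x t)) θ) :
    ∀ j : Fin p,
      |∑ t, fderiv ℝ (v t) θ (EuclideanSpace.single j 1)
          * ((if x t ≤ v t θ then (1 : ℝ) else 0) - β)|
        ≤ ∑ t, |fderiv ℝ (v t) θ (EuclideanSpace.single j 1)|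
          * (if x t = v t θ then (1 : ℝ) else 0) := by
  intro j
  have hdiff : ∀ t, DifferentiableAt ℝ (v t) θ := fun t => (hv t).differentiable one_ne_zero θ
  set e : EuclideanSpace ℝ (Fin p) := EuclideanSpace.single j 1
  have hpos := pinball_directional_subgradient_nonneg_of_isLocalMin hdiff hmin e
  have hneg := pinball_directional_subgradient_nonneg_of_isLocalMin hdiff hmin (-e)
  simp only [map_neg, abs_neg, neg_mul, sum_add_distrib, sum_neg_distrib] at hpos hneg
  exact abs_le.2 ⟨by linarith, by linarith⟩

/-- Deterministic first-order condition for nonlinear quantile regression (key step of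
Lemma V.2): at a local minimizer `θ̂` of the empirical pinball criterion, each coordinate
of the (sub)gradient is bounded by the number of exact fits:
`|Σ_t ∂_j v_t(θ̂)·(1{x_t ≤ v_t(θ̂)} − β)| ≤ Σ_t |∂_j v_t(θ̂)|·1{x_t = v_t(θ̂)}`. -/
theorem pinball_first_order_condition
    (β : ℝ) (hβ : β ∈ Set.Ioo (0 : ℝ) 1) (n p : ℕ)
    (x : Fin n → ℝ) (v : Fin n → EuclideanSpace ℝ (Fin p) → ℝ)
    (hv : ∀ t, ContDiff ℝ 1 (v t))
    (θ : EuclideanSpace ℝ (Fin p))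
    (hmin : IsLocalMin (fun θ' => ∑ t, SVaR β (v t θ') (x t)) θ) :
    ∀ j : Fin p,
      |∑ t, fderiv ℝ (v t) θ (EuclideanSpace.single j 1)
          * ((if x t ≤ v t θ then (1 : ℝ) else 0) - β)|
        ≤ ∑ t, |fderiv ℝ (v t) θ (EuclideanSpace.single j 1)|
          * (if x t = v t θ then (1 : ℝ) else 0) :=
  pinball_first_order_condition_general β n p x v hv θ hmin
end

section
/- Let (Ω, 𝓐, μ) be a probability space with Z : Ω → ℝᵏ and X : Ω → ℝ measurable, and suppose X has a conditional density bounded by K given Z. Let v̲, v̄ : ℝᵏ → ℝ be measurable with v̲(z) ≤ v̄(z) for all z, and let W : ℝᵏ → [0,∞) be measurable with E[(v̄(Z) − v̲(Z))·W(Z)] < ∞. Then E[(1{X ≤ v̄(Z)} − 1{X ≤ v̲(Z)})·W(Z)] ≤ K·E[(v̄(Z) − v̲(Z))·W(Z)]. -/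
open MeasureTheory ProbabilityTheory Set

/-!
Since `v̲ ≤ v̄`, the indicator difference is the indicator of `{v̲(Z) < X ≤ v̄(Z)}`. Disintegrating
the law of `(Z, X)` along `Z`, its weighted expectation is `E[W(Z) · κ(Z)(Ioc v̲(Z) v̄(Z))]`, and a
density bounded by `K` gives `κ(z)(Ioc a b) ≤ K (b - a)`.
-/

lemma withDensity_Ioc_le_of_le {g : ℝ → ℝ} {K : ℝ} (hg : ∀ x, g x ≤ K) (a b : ℝ) :
    volume.withDensity (fun x => ENNReal.ofReal (g x)) (Ioc a b)
      ≤ ENNReal.ofReal K * ENNReal.ofReal (b - a) := by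
  rw [withDensity_apply _ measurableSet_Ioc, ← Real.volume_Ioc, ← setLIntegral_const]
  exact lintegral_mono fun x => ENNReal.ofReal_le_ofReal (hg x)

lemma nonneg_of_withDensity_ne_zero_of_le {g : ℝ → ℝ} {K : ℝ} (hg : ∀ x, g x ≤ K)
    (hne : volume.withDensity (fun x => ENNReal.ofReal (g x)) ≠ 0) : 0 ≤ K := by
  by_contra! hK
  refine hne ?_
  simp [ENNReal.ofReal_of_nonpos ((hg _).trans hK.le)]

lemma sub_ite_le_mul_eq_indicator {a b x c : ℝ} (hab : a ≤ b) :
    ((if x ≤ b then (1 : ℝ) else 0) - if x ≤ a then 1 else 0) * c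
      = (Ioc a b).indicator (fun _ => c) x := by
  simp only [indicator_apply, mem_Ioc]
  split_ifs <;> grind

section Disintegration

variable {Ω E : Type*} [MeasurableSpace Ω] [MeasurableSpace E]

lemma measurableSet_snd_mem_Ioc {lo hi : E → ℝ} (hlo : Measurable lo) (hhi : Measurable hi) :
    MeasurableSet {p : E × ℝ | p.2 ∈ Ioc (lo p.1) (hi p.1)} :=
  (measurableSet_lt (hlo.comp measurable_fst) measurable_snd).inter
    (measurableSet_le measurable_snd (hhi.comp measurable_fst))

lemma lintegral_indicator_Ioc_le_of_kernel_Ioc_le {μ : Measure Ω} {Z : Ω → E} {X : Ω → ℝ}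
    (hZ : Measurable Z) (hX : Measurable X) {κ : Kernel E ℝ} [IsSFiniteKernel κ]
    [SFinite (μ.map Z)] (hjoint : μ.map (fun ω => (Z ω, X ω)) = (μ.map Z) ⊗ₘ κ) {K : ℝ}
    (hκ : ∀ᵐ z ∂(μ.map Z), ∀ a b, κ z (Ioc a b) ≤ ENNReal.ofReal K * ENNReal.ofReal (b - a))
    {lo hi : E → ℝ} (hlo : Measurable lo) (hhi : Measurable hi)
    {w : E → ENNReal} (hw : Measurable w) :
    ∫⁻ ω, (Ioc (lo (Z ω)) (hi (Z ω))).indicator (fun _ => w (Z ω)) (X ω) ∂μ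
      ≤ ENNReal.ofReal K * ∫⁻ ω, ENNReal.ofReal (hi (Z ω) - lo (Z ω)) * w (Z ω) ∂μ := by
  have hF : Measurable fun p : E × ℝ => (Ioc (lo p.1) (hi p.1)).indicator (fun _ => w p.1) p.2 :=
    (hw.comp measurable_fst).indicator (measurableSet_snd_mem_Ioc hlo hhi)
  calc ∫⁻ ω, (Ioc (lo (Z ω)) (hi (Z ω))).indicator (fun _ => w (Z ω)) (X ω) ∂μ
      = ∫⁻ z, ∫⁻ x, (Ioc (lo z) (hi z)).indicator (fun _ => w z) x ∂(κ z) ∂(μ.map Z) := by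
        rw [← Measure.lintegral_compProd hF, ← hjoint, lintegral_map hF (hZ.prodMk hX)]
    _ = ∫⁻ z, w z * κ z (Ioc (lo z) (hi z)) ∂(μ.map Z) := by
        simp_rw [lintegral_indicator_const measurableSet_Ioc]
    _ ≤ ∫⁻ z, ENNReal.ofReal K * (ENNReal.ofReal (hi z - lo z) * w z) ∂(μ.map Z) :=
        lintegral_mono_ae <| hκ.mono fun z hz => (mul_le_mul_right (hz _ _) _).trans_eq (by ring)
    _ = ENNReal.ofReal K * ∫⁻ ω, ENNReal.ofReal (hi (Z ω) - lo (Z ω)) * w (Z ω) ∂μ := by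
        rw [lintegral_const_mul' _ _ ENNReal.ofReal_ne_top,
          lintegral_map (f := fun z => ENNReal.ofReal (hi z - lo z) * w z)
            ((hhi.sub hlo).ennreal_ofReal.mul hw) hZ]

end Disintegration

lemma integral_le_mul_integral_of_lintegral_le {α : Type*} [MeasurableSpace α] {μ : Measure α}
    {f g : α → ℝ} {K : ℝ} (hK : 0 ≤ K) (hf : 0 ≤ f) (hfm : AEStronglyMeasurable f μ)
    (hg : 0 ≤ g) (hgi : Integrable g μ)
    (h : ∫⁻ x, ENNReal.ofReal (f x) ∂μ ≤ ENNReal.ofReal K * ∫⁻ x, ENNReal.ofReal (g x) ∂μ) :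
    ∫ x, f x ∂μ ≤ K * ∫ x, g x ∂μ := by
  rw [← ofReal_integral_eq_lintegral_ofReal hgi (.of_forall hg), ← ENNReal.ofReal_mul hK] at h
  rw [integral_eq_lintegral_of_nonneg_ae (.of_forall hf) hfm]
  exact ENNReal.toReal_le_of_le_ofReal (mul_nonneg hK (integral_nonneg hg)) h

theorem indicator_diff_weighted_bound_general
    {Ω : Type*} [MeasurableSpace Ω] (μ : Measure Ω) [IsProbabilityMeasure μ]
    {k : ℕ}
    (Z : Ω → EuclideanSpace ℝ (Fin k)) (hZ : Measurable Z)
    (X : Ω → ℝ) (hX : Measurable X)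
    (K : ℝ)
    (κ : Kernel (EuclideanSpace ℝ (Fin k)) ℝ) [IsMarkovKernel κ]
    (f : EuclideanSpace ℝ (Fin k) → ℝ → ℝ)
    (hjoint : Measure.map (fun ω => (Z ω, X ω)) μ = (Measure.map Z μ).compProd κ)
    (hdens : ∀ᵐ z ∂(Measure.map Z μ),
      κ z = (volume : Measure ℝ).withDensity (fun x => ENNReal.ofReal (f z x))
        ∧ ∀ x, f z x ≤ K)
    (vlo vhi : EuclideanSpace ℝ (Fin k) → ℝ)
    (hvlo : Measurable vlo) (hvhi : Measurable vhi)
    (hle : ∀ z, vlo z ≤ vhi z)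
    (W : EuclideanSpace ℝ (Fin k) → ℝ) (hW : Measurable W) (hWnn : ∀ z, 0 ≤ W z)
    (hint : Integrable (fun ω => (vhi (Z ω) - vlo (Z ω)) * W (Z ω)) μ) :
    ∫ ω, ((if X ω ≤ vhi (Z ω) then (1 : ℝ) else 0)
        - (if X ω ≤ vlo (Z ω) then (1 : ℝ) else 0)) * W (Z ω) ∂μ
      ≤ K * ∫ ω, (vhi (Z ω) - vlo (Z ω)) * W (Z ω) ∂μ := by
  have := Measure.isProbabilityMeasure_map (μ := μ) hZ.aemeasurable
  have hK : 0 ≤ K := by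
    obtain ⟨z, hκz, hfz⟩ := hdens.exists
    exact nonneg_of_withDensity_ne_zero_of_le hfz (hκz ▸ IsProbabilityMeasure.ne_zero (κ z))
  have hκ : ∀ᵐ z ∂(μ.map Z), ∀ a b, κ z (Ioc a b) ≤ ENNReal.ofReal K * ENNReal.ofReal (b - a) :=
    hdens.mono fun z ⟨hκz, hfz⟩ => hκz ▸ withDensity_Ioc_le_of_le hfz
  simp_rw [sub_ite_le_mul_eq_indicator (hle _)]
  refine integral_le_mul_integral_of_lintegral_le hK
    (fun ω => indicator_nonneg (fun _ _ => hWnn _) _) ?_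
    (fun ω => mul_nonneg (sub_nonneg.2 (hle _)) (hWnn _)) hint ?_
  · exact (((hW.comp measurable_fst).indicator (measurableSet_snd_mem_Ioc hvlo hvhi)).comp
      (hZ.prodMk hX)).aestronglyMeasurable
  · simp_rw [ENNReal.ofReal_mul' (hWnn _), ← Function.comp_apply (f := ENNReal.ofReal),
      ← indicator_comp_of_zero ENNReal.ofReal_zero]
    exact lintegral_indicator_Ioc_le_of_kernel_Ioc_le hZ hX hjoint hκ hvlo hvhi
      hW.ennreal_ofReal

/-- Weighted indicator-difference bound: if `X` has a conditional density bounded by `K`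
given `Z`, and `v̲ ≤ v̄` are measurable threshold functions, then for every measurable
weight `W ≥ 0` with `E[(v̄(Z) − v̲(Z))·W(Z)] < ∞`,
`E[(1{X ≤ v̄(Z)} − 1{X ≤ v̲(Z)})·W(Z)] ≤ K·E[(v̄(Z) − v̲(Z))·W(Z)]`. -/
theorem indicator_diff_weighted_bound
    {Ω : Type*} [MeasurableSpace Ω] (μ : Measure Ω) [IsProbabilityMeasure μ]
    {k : ℕ}
    (Z : Ω → EuclideanSpace ℝ (Fin k)) (hZ : Measurable Z)
    (X : Ω → ℝ) (hX : Measurable X)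
    (K : ℝ)
    (κ : Kernel (EuclideanSpace ℝ (Fin k)) ℝ) [IsMarkovKernel κ]
    (f : EuclideanSpace ℝ (Fin k) → ℝ → ℝ)
    (hfmeas : Measurable fun zx : EuclideanSpace ℝ (Fin k) × ℝ => f zx.1 zx.2)
    (hfnn : ∀ z x, 0 ≤ f z x)
    (hjoint : Measure.map (fun ω => (Z ω, X ω)) μ = (Measure.map Z μ).compProd κ)
    (hdens : ∀ᵐ z ∂(Measure.map Z μ),
      κ z = (volume : Measure ℝ).withDensity (fun x => ENNReal.ofReal (f z x))
        ∧ ∀ x, f z x ≤ K)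
    (vlo vhi : EuclideanSpace ℝ (Fin k) → ℝ)
    (hvlo : Measurable vlo) (hvhi : Measurable vhi)
    (hle : ∀ z, vlo z ≤ vhi z)
    (W : EuclideanSpace ℝ (Fin k) → ℝ) (hW : Measurable W) (hWnn : ∀ z, 0 ≤ W z)
    (hint : Integrable (fun ω => (vhi (Z ω) - vlo (Z ω)) * W (Z ω)) μ) :
    ∫ ω, ((if X ω ≤ vhi (Z ω) then (1 : ℝ) else 0)
        - (if X ω ≤ vlo (Z ω) then (1 : ℝ) else 0)) * W (Z ω) ∂μ
      ≤ K * ∫ ω, (vhi (Z ω) - vlo (Z ω)) * W (Z ω) ∂μ :=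
  indicator_diff_weighted_bound_general μ Z hZ X hX K κ f hjoint hdens vlo vhi hvlo hvhi hle W hW
    hWnn hint
end

section
/- Let (Ω, 𝓐, μ) be a probability space with Z : Ω → ℝᵏ and X, Y : Ω → ℝ measurable, and suppose X has a conditional density bounded by K given Z. Let δ > 0 and let v̲, v̄ : ℝᵏ → ℝ be measurable with v̲(z) ≤ v̄(z) and v̄(z) − v̲(z) ≤ 2δ·V₁(z) for all z, where V₁ : ℝᵏ → [0,∞) is measurable with E[V₁(Z)] < ∞. Let q > 1, p = q/(q−1), and assume E[|Y|^{2q}] < ∞. Then E[(1{X > v̲(Z)} − 1{X > v̄(Z)})·Y²] ≤ (2Kδ·E[V₁(Z)])^{1/p}·(E[|Y|^{2q}])^{1/q}. -/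
open MeasureTheory ProbabilityTheory Set

/-!
On the event `A = {v̲(Z) < X ≤ v̄(Z)}` the integrand is `Y²` and it vanishes elsewhere, so Hölder's
inequality bounds the left-hand side by `μ(A)^{1/p} · ‖Y²‖_q`. Disintegrating the joint law of
`(Z, X)`, `μ(A)` is the `Z`-average of the conditional mass of the interval `(v̲(Z), v̄(Z)]`, which a
density bounded by `K` caps at `K · (v̄(Z) − v̲(Z)) ≤ 2Kδ · V₁(Z)`.
-/

theorem ite_lt_sub_ite_lt_eq_indicator_Ioc {a b : ℝ} (hab : a ≤ b) (x : ℝ) :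
    ((if a < x then (1 : ℝ) else 0) - if b < x then 1 else 0) = (Ioc a b).indicator 1 x := by
  simp only [indicator_apply, mem_Ioc, Pi.one_apply]
  split_ifs <;> grind

theorem sq_rpow_eq_abs_rpow_two_mul (x q : ℝ) : (x ^ 2) ^ q = |x| ^ (2 * q) := by
  rw [← sq_abs, ← Real.rpow_natCast_mul (abs_nonneg x)]
  norm_num

theorem measurableSet_setOf_mem_Ioc {α : Type*} [MeasurableSpace α] {a b x : α → ℝ}
    (ha : Measurable a) (hb : Measurable b) (hx : Measurable x) :
    MeasurableSet {ω | x ω ∈ Ioc (a ω) (b ω)} :=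
  (measurableSet_lt ha hx).inter (measurableSet_le hx hb)

section Holder

variable {α : Type*} [MeasurableSpace α] {μ : Measure α}

theorem memLp_sq_of_integrable_abs_rpow {Y : α → ℝ} (hY : AEStronglyMeasurable Y μ) {q : ℝ}
    (hq : 0 < q) (hYint : Integrable (fun x => |Y x| ^ (2 * q)) μ) :
    MemLp (fun x => Y x ^ 2) (ENNReal.ofReal q) μ := by
  refine (integrable_norm_rpow_iff (hY.pow 2) (by simpa using hq) ENNReal.ofReal_ne_top).mp ?_
  simpa [ENNReal.toReal_ofReal hq.le, sq_rpow_eq_abs_rpow_two_mul] using hYint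

theorem setIntegral_le_measureReal_rpow_mul_integral_rpow [IsFiniteMeasure μ] {p q : ℝ}
    (hpq : p.HolderConjugate q) {s : Set α} (hs : MeasurableSet s) {g : α → ℝ}
    (hg_nn : 0 ≤ᵐ[μ] g) (hg : MemLp g (ENNReal.ofReal q) μ) :
    ∫ x in s, g x ∂μ ≤ μ.real s ^ (1 / p) * (∫ x, g x ^ q ∂μ) ^ (1 / q) := by
  have h_ind_rpow : (fun x => s.indicator (1 : α → ℝ) x ^ p) = s.indicator 1 := by
    funext x
    by_cases hx : x ∈ s <;> simp [hx, hpq.ne_zero]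
  calc ∫ x in s, g x ∂μ = ∫ x, s.indicator 1 x * g x ∂μ := by
        rw [← integral_indicator hs]
        simp_rw [← Set.indicator_mul_left, Pi.one_apply, one_mul]
    _ ≤ (∫ x, s.indicator (1 : α → ℝ) x ^ p ∂μ) ^ (1 / p) * (∫ x, g x ^ q ∂μ) ^ (1 / q) :=
        integral_mul_le_Lp_mul_Lq_of_nonneg hpq
          (Filter.Eventually.of_forall fun x => Set.indicator_nonneg (fun _ _ => zero_le_one) x)
          hg_nn (memLp_indicator_const _ hs 1 (Or.inr (measure_ne_top μ s))) hg
    _ = μ.real s ^ (1 / p) * (∫ x, g x ^ q ∂μ) ^ (1 / q) := by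
        rw [h_ind_rpow, integral_indicator_one hs]

end Holder

section BoundedDensity

theorem nonneg_of_withDensity_ofReal_le {α : Type*} [MeasurableSpace α] {μ : Measure α}
    {f : α → ℝ} {K : ℝ} (hμ : μ.withDensity (fun x => ENNReal.ofReal (f x)) ≠ 0)
    (hf : ∀ x, f x ≤ K) : 0 ≤ K := by
  by_contra! hK
  have hzero : (fun x => ENNReal.ofReal (f x)) = 0 :=
    funext fun x => ENNReal.ofReal_eq_zero.mpr ((hf x).trans hK.le)
  exact hμ (by rw [hzero, withDensity_zero])

theorem withDensity_ofReal_Ioc_le {f : ℝ → ℝ} {K : ℝ} (hK : 0 ≤ K) (hf : ∀ x, f x ≤ K)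
    (a b : ℝ) :
    volume.withDensity (fun x => ENNReal.ofReal (f x)) (Ioc a b) ≤ ENNReal.ofReal (K * (b - a)) :=
  calc volume.withDensity (fun x => ENNReal.ofReal (f x)) (Ioc a b)
      = ∫⁻ x in Ioc a b, ENNReal.ofReal (f x) := withDensity_apply _ measurableSet_Ioc
    _ ≤ ∫⁻ _ in Ioc a b, ENNReal.ofReal K := lintegral_mono fun x => ENNReal.ofReal_le_ofReal (hf x)
    _ = ENNReal.ofReal (K * (b - a)) := by
        rw [setLIntegral_const, Real.volume_Ioc, ENNReal.ofReal_mul hK]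

variable {Ω E : Type*} [MeasurableSpace Ω] [MeasurableSpace E] {μ : Measure Ω} [IsFiniteMeasure μ]
  {Z : Ω → E} {X : Ω → ℝ} {κ : Kernel E ℝ} [IsSFiniteKernel κ]

theorem measure_preimage_eq_lintegral_of_map_eq_compProd (hZ : Measurable Z) (hX : Measurable X)
    (hjoint : μ.map (fun ω => (Z ω, X ω)) = (μ.map Z).compProd κ)
    {S : Set (E × ℝ)} (hS : MeasurableSet S) :
    μ {ω | (Z ω, X ω) ∈ S} = ∫⁻ z, κ z (Prod.mk z ⁻¹' S) ∂(μ.map Z) := by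
  rw [← Measure.compProd_apply hS, ← hjoint, Measure.map_apply (hZ.prodMk hX) hS]
  rfl

theorem measureReal_setOf_mem_Ioc_le (hZ : Measurable Z) (hX : Measurable X)
    (hjoint : μ.map (fun ω => (Z ω, X ω)) = (μ.map Z).compProd κ)
    {f : E → ℝ → ℝ} {K : ℝ} (hK : 0 ≤ K)
    (hdens : ∀ᵐ z ∂(μ.map Z),
      κ z = volume.withDensity (fun x => ENNReal.ofReal (f z x)) ∧ ∀ x, f z x ≤ K)
    {lo hi w : E → ℝ} (hlo : Measurable lo) (hhi : Measurable hi)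
    (hle : ∀ z, lo z ≤ hi z) (hw : ∀ z, hi z - lo z ≤ w z) (hw_int : Integrable w (μ.map Z)) :
    μ.real {ω | X ω ∈ Ioc (lo (Z ω)) (hi (Z ω))} ≤ K * ∫ z, w z ∂(μ.map Z) := by
  have hKw_nn : 0 ≤ᵐ[μ.map Z] fun z => K * w z :=
    Filter.Eventually.of_forall fun z => mul_nonneg hK ((sub_nonneg.mpr (hle z)).trans (hw z))
  have hmass : ∀ᵐ z ∂(μ.map Z), κ z (Ioc (lo z) (hi z)) ≤ ENNReal.ofReal (K * w z) := by
    filter_upwards [hdens] with z ⟨hκz, hfz⟩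
    rw [hκz]
    exact (withDensity_ofReal_Ioc_le hK hfz _ _).trans
      (ENNReal.ofReal_le_ofReal (mul_le_mul_of_nonneg_left (hw z) hK))
  refine ENNReal.toReal_le_of_le_ofReal (integral_nonneg_of_ae hKw_nn |>.trans_eq ?_) ?_
  · exact integral_const_mul K w
  calc μ {ω | X ω ∈ Ioc (lo (Z ω)) (hi (Z ω))}
      = ∫⁻ z, κ z (Ioc (lo z) (hi z)) ∂(μ.map Z) :=
        measure_preimage_eq_lintegral_of_map_eq_compProd hZ hX hjoint
          (S := {zx | zx.2 ∈ Ioc (lo zx.1) (hi zx.1)})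
          (measurableSet_setOf_mem_Ioc (hlo.comp measurable_fst) (hhi.comp measurable_fst)
            measurable_snd)
    _ ≤ ∫⁻ z, ENNReal.ofReal (K * w z) ∂(μ.map Z) := lintegral_mono_ae hmass
    _ = ENNReal.ofReal (K * ∫ z, w z ∂(μ.map Z)) := by
        rw [← integral_const_mul, ofReal_integral_eq_lintegral_ofReal (hw_int.const_mul K) hKw_nn]

end BoundedDensity

theorem indicator_diff_squared_outcome_bound_general
    {Ω : Type*} [MeasurableSpace Ω] (μ : Measure Ω) [IsProbabilityMeasure μ]
    {k : ℕ}
    (Z : Ω → EuclideanSpace ℝ (Fin k)) (hZ : Measurable Z)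
    (X Y : Ω → ℝ) (hX : Measurable X) (hY : Measurable Y)
    (K : ℝ)
    (κ : Kernel (EuclideanSpace ℝ (Fin k)) ℝ) [IsMarkovKernel κ]
    (f : EuclideanSpace ℝ (Fin k) → ℝ → ℝ)
    (hjoint : Measure.map (fun ω => (Z ω, X ω)) μ = (Measure.map Z μ).compProd κ)
    (hdens : ∀ᵐ z ∂(Measure.map Z μ),
      κ z = (volume : Measure ℝ).withDensity (fun x => ENNReal.ofReal (f z x))
        ∧ ∀ x, f z x ≤ K)
    (δ : ℝ)
    (vlo vhi : EuclideanSpace ℝ (Fin k) → ℝ)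
    (hvlo : Measurable vlo) (hvhi : Measurable vhi)
    (V₁ : EuclideanSpace ℝ (Fin k) → ℝ) (hV₁meas : Measurable V₁)
    (hle : ∀ z, vlo z ≤ vhi z)
    (hsep : ∀ z, vhi z - vlo z ≤ 2 * δ * V₁ z)
    (hV₁int : Integrable (fun ω => V₁ (Z ω)) μ)
    (q : ℝ) (hq : 1 < q) (p : ℝ) (hp : p = q / (q - 1))
    (hYint : Integrable (fun ω => |Y ω| ^ (2 * q)) μ) :
    ∫ ω, ((if vlo (Z ω) < X ω then (1 : ℝ) else 0)
        - (if vhi (Z ω) < X ω then (1 : ℝ) else 0)) * (Y ω) ^ 2 ∂μ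
      ≤ (2 * K * δ * ∫ ω, V₁ (Z ω) ∂μ) ^ (1 / p)
        * (∫ ω, |Y ω| ^ (2 * q) ∂μ) ^ (1 / q) := by
  have : IsProbabilityMeasure (μ.map Z) := Measure.isProbabilityMeasure_map hZ.aemeasurable
  have hK : 0 ≤ K := by
    obtain ⟨z, hκz, hfz⟩ := hdens.exists
    exact nonneg_of_withDensity_ofReal_le (hκz ▸ IsProbabilityMeasure.ne_zero (κ z)) hfz
  have hpq : p.HolderConjugate q := hp ▸ (Real.HolderConjugate.conjExponent hq).symm
  set A := {ω | X ω ∈ Ioc (vlo (Z ω)) (vhi (Z ω))}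
  have hA : MeasurableSet A := measurableSet_setOf_mem_Ioc (hvlo.comp hZ) (hvhi.comp hZ) hX
  have hμA : μ.real A ≤ 2 * K * δ * ∫ ω, V₁ (Z ω) ∂μ := by
    have hV₁Z : AEStronglyMeasurable (fun z => 2 * δ * V₁ z) (μ.map Z) :=
      (hV₁meas.const_mul _).aestronglyMeasurable
    have hbound := measureReal_setOf_mem_Ioc_le hZ hX hjoint hK hdens hvlo hvhi hle hsep
      ((integrable_map_measure hV₁Z hZ.aemeasurable).mpr (hV₁int.const_mul (2 * δ)))
    rwa [integral_map hZ.aemeasurable hV₁Z, integral_const_mul, ← mul_assoc, ← mul_assoc,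
      mul_comm K 2] at hbound
  calc _ = ∫ ω in A, Y ω ^ 2 ∂μ := by
        rw [← integral_indicator hA]
        congr 1 with ω
        rw [ite_lt_sub_ite_lt_eq_indicator_Ioc (hle _)]
        simp [A, indicator_apply]
    _ ≤ μ.real A ^ (1 / p) * (∫ ω, (Y ω ^ 2) ^ q ∂μ) ^ (1 / q) :=
        setIntegral_le_measureReal_rpow_mul_integral_rpow hpq hA
          (Filter.Eventually.of_forall fun ω => sq_nonneg (Y ω))
          (memLp_sq_of_integrable_abs_rpow hY.aestronglyMeasurable (by linarith) hYint)
    _ ≤ _ := by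
        simp_rw [sq_rpow_eq_abs_rpow_two_mul]
        gcongr
        exact hpq.one_div_nonneg

/-- Hölder-type bound (display B₁₂ₜ of the consistency proof): if `X` has a conditional
density bounded by `K` given `Z`, and `v̲ ≤ v̄` with `v̄ − v̲ ≤ 2δ·V₁` for an integrable
`V₁ ≥ 0`, then for `q > 1` and `p = q/(q−1)`,
`E[(1{X > v̲(Z)} − 1{X > v̄(Z)})·Y²] ≤ (2Kδ·E[V₁(Z)])^{1/p}·(E[|Y|^{2q}])^{1/q}`. -/
theorem indicator_diff_squared_outcome_bound
    {Ω : Type*} [MeasurableSpace Ω] (μ : Measure Ω) [IsProbabilityMeasure μ]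
    {k : ℕ}
    (Z : Ω → EuclideanSpace ℝ (Fin k)) (hZ : Measurable Z)
    (X Y : Ω → ℝ) (hX : Measurable X) (hY : Measurable Y)
    (K : ℝ)
    (κ : Kernel (EuclideanSpace ℝ (Fin k)) ℝ) [IsMarkovKernel κ]
    (f : EuclideanSpace ℝ (Fin k) → ℝ → ℝ)
    (hfmeas : Measurable fun zx : EuclideanSpace ℝ (Fin k) × ℝ => f zx.1 zx.2)
    (hfnn : ∀ z x, 0 ≤ f z x)
    (hjoint : Measure.map (fun ω => (Z ω, X ω)) μ = (Measure.map Z μ).compProd κ)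
    (hdens : ∀ᵐ z ∂(Measure.map Z μ),
      κ z = (volume : Measure ℝ).withDensity (fun x => ENNReal.ofReal (f z x))
        ∧ ∀ x, f z x ≤ K)
    (δ : ℝ) (hδ : 0 < δ)
    (vlo vhi : EuclideanSpace ℝ (Fin k) → ℝ)
    (hvlo : Measurable vlo) (hvhi : Measurable vhi)
    (V₁ : EuclideanSpace ℝ (Fin k) → ℝ) (hV₁meas : Measurable V₁)
    (hV₁nn : ∀ z, 0 ≤ V₁ z)
    (hle : ∀ z, vlo z ≤ vhi z)
    (hsep : ∀ z, vhi z - vlo z ≤ 2 * δ * V₁ z)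
    (hV₁int : Integrable (fun ω => V₁ (Z ω)) μ)
    (q : ℝ) (hq : 1 < q) (p : ℝ) (hp : p = q / (q - 1))
    (hYint : Integrable (fun ω => |Y ω| ^ (2 * q)) μ) :
    ∫ ω, ((if vlo (Z ω) < X ω then (1 : ℝ) else 0)
        - (if vhi (Z ω) < X ω then (1 : ℝ) else 0)) * (Y ω) ^ 2 ∂μ
      ≤ (2 * K * δ * ∫ ω, V₁ (Z ω) ∂μ) ^ (1 / p)
        * (∫ ω, |Y ω| ^ (2 * q) ∂μ) ^ (1 / q) :=
  indicator_diff_squared_outcome_bound_general μ Z hZ X Y hX hY K κ f hjoint hdens δ vlo vhi hvlo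
    hvhi V₁ hV₁meas hle hsep hV₁int q hq p hp hYint
end

section
/- Let (Ω, 𝓐, μ) be a probability space with Z : Ω → ℝᵏ and X : Ω → ℝ measurable, and suppose the joint law of (Z,X) equals ν ⊗ κ, where ν is the law of Z and κ is a Markov kernel such that for ν-almost every z, κ(z) has a Lebesgue density f(z,·) with |f(z,x) − f(z,x′)| ≤ K·|x − x′| for all x, x′ ∈ ℝ. Then for every measurable v : ℝᵏ → ℝ, every integrable W : ℝᵏ → ℝ (with W(Z)·f(Z, v(Z)) integrable), and every c > 0, | E[ W(Z)·(2c)^{−1}·1{|X − v(Z)| < c} ] − E[ W(Z)·f(Z, v(Z)) ] | ≤ K·c·E[|W(Z)|]. -/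
/-!
Disintegrating the joint law of `(Z, X)` along `Z` replaces the indicator `1{|X - v(Z)| < c}` by
its conditional probability `κ(Z)(B(v(Z), c)) = ∫_{B(v(Z), c)} f(Z, ·)`. The average of a
`K`-Lipschitz function over an interval of radius `c` differs from its value at the centre by at
most `K c`; multiplying by `|W(Z)|` and integrating gives the bound.
-/

open MeasureTheory ProbabilityTheory

theorem abs_inv_two_mul_setIntegral_ball_sub_le {g : ℝ → ℝ} {K : ℝ}
    (hg : ∀ x y, |g x - g y| ≤ K * |x - y|) (a : ℝ) {c : ℝ} (hc : 0 < c) :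
    |(2 * c)⁻¹ * (∫ x in Metric.ball a c, g x) - g a| ≤ K * c := by
  have hK : 0 ≤ K := (abs_nonneg _).trans (by simpa using hg 1 0)
  have hcont : Continuous g := (LipschitzWith.of_dist_le' hg).continuous
  have hvol : volume.real (Metric.ball a c) = 2 * c := Real.volume_real_ball hc.le
  have hint : IntegrableOn g (Metric.ball a c) :=
    (hcont.continuousOn.integrableOn_compact (isCompact_closedBall a c)).mono_set
      Metric.ball_subset_closedBall
  have hdev : ‖∫ x in Metric.ball a c, (g x - g a)‖ ≤ K * c * volume.real (Metric.ball a c) := by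
    refine norm_setIntegral_le_of_norm_le_const measure_ball_lt_top fun x hx => ?_
    calc ‖g x - g a‖ ≤ K * |x - a| := hg x a
      _ ≤ K * c := by gcongr; exact (Metric.mem_ball.mp hx).le
  have hcenter : (2 * c)⁻¹ * (∫ x in Metric.ball a c, g x) - g a
      = (2 * c)⁻¹ * ∫ x in Metric.ball a c, (g x - g a) := by
    rw [integral_sub hint (integrableOn_const measure_ball_lt_top.ne), setIntegral_const, hvol,
      smul_eq_mul]
    field_simp
  rw [Real.norm_eq_abs, hvol] at hdev
  rw [hcenter, abs_mul, abs_of_pos (by positivity), inv_mul_le_iff₀ (by positivity)]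
  linarith

theorem measureReal_withDensity_ofReal {α : Type*} [MeasurableSpace α] {μ : Measure α}
    {g : α → ℝ} (hg : AEMeasurable g μ) (hg0 : ∀ᵐ x ∂μ, 0 ≤ g x) {s : Set α}
    (hs : MeasurableSet s) :
    (μ.withDensity fun x => ENNReal.ofReal (g x)).real s = ∫ x in s, g x ∂μ := by
  rw [measureReal_def, withDensity_apply _ hs,
    integral_eq_lintegral_of_nonneg_ae (ae_restrict_of_ae hg0) hg.restrict.aestronglyMeasurable]

theorem abs_inv_two_mul_withDensity_ball_sub_le {g : ℝ → ℝ} {K : ℝ} (hg0 : ∀ x, 0 ≤ g x)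
    (hg : ∀ x y, |g x - g y| ≤ K * |x - y|) (a : ℝ) {c : ℝ} (hc : 0 < c) :
    |(2 * c)⁻¹ * (volume.withDensity fun x => ENNReal.ofReal (g x)).real (Metric.ball a c) - g a|
      ≤ K * c := by
  rw [measureReal_withDensity_ofReal (LipschitzWith.of_dist_le' hg).continuous.aemeasurable
    (.of_forall hg0) measurableSet_ball]
  exact abs_inv_two_mul_setIntegral_ball_sub_le hg a hc

section Disintegration

variable {α β : Type*} [MeasurableSpace α] [MeasurableSpace β] {κ : Kernel α β} [IsMarkovKernel κ]
  {h : α → ℝ} {s : Set (α × β)}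

theorem integrable_compProd_indicator_comp_fst {ν : Measure α} [SFinite ν] (hh : Integrable h ν)
    (hs : MeasurableSet s) : Integrable (s.indicator fun p => h p.1) (ν ⊗ₘ κ) := by
  have hh' : Integrable h ((ν ⊗ₘ κ).map Prod.fst) := by rwa [← Measure.fst, Measure.fst_compProd]
  exact (hh'.comp_aemeasurable measurable_fst.aemeasurable).indicator hs

theorem integrable_measureReal_prodMk_mul {ν : Measure α} (hh : Integrable h ν)
    (hs : MeasurableSet s) : Integrable (fun a => (κ a).real (Prod.mk a ⁻¹' s) * h a) ν :=
  hh.bdd_mul (c := 1) (Kernel.measurable_kernel_prodMk_left hs).ennreal_toReal.aestronglyMeasurable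
    (.of_forall fun _ => by
      rw [Real.norm_eq_abs, abs_of_nonneg measureReal_nonneg]; exact measureReal_le_one)

theorem integral_compProd_indicator_comp_fst {ν : Measure α} [SFinite ν] (hh : Integrable h ν)
    (hs : MeasurableSet s) :
    ∫ p, s.indicator (fun p => h p.1) p ∂(ν ⊗ₘ κ) = ∫ a, (κ a).real (Prod.mk a ⁻¹' s) * h a ∂ν := by
  rw [Measure.integral_compProd (integrable_compProd_indicator_comp_fst hh hs)]
  refine integral_congr_ae (.of_forall fun a => ?_)
  dsimp only
  rw [← smul_eq_mul, ← integral_indicator_const _ (measurable_prodMk_left hs)]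
  -- `(a, x) ∈ s` and `x ∈ Prod.mk a ⁻¹' s` are the same proposition
  rfl

theorem integral_indicator_comp_eq_of_map_eq_compProd {Ω : Type*} [MeasurableSpace Ω]
    {μ : Measure Ω} [SFinite μ] {Z : Ω → α} {X : Ω → β} (hZ : AEMeasurable Z μ)
    (hX : AEMeasurable X μ) (hjoint : μ.map (fun ω => (Z ω, X ω)) = μ.map Z ⊗ₘ κ)
    (hh : Integrable h (μ.map Z)) (hs : MeasurableSet s) :
    ∫ ω, s.indicator (fun p => h p.1) (Z ω, X ω) ∂μ
      = ∫ ω, (κ (Z ω)).real (Prod.mk (Z ω) ⁻¹' s) * h (Z ω) ∂μ := by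
  have hint := integrable_compProd_indicator_comp_fst (κ := κ) hh hs
  rw [← hjoint] at hint
  rw [← integral_map (hZ.prodMk hX) hint.aestronglyMeasurable, hjoint,
    integral_compProd_indicator_comp_fst hh hs,
    integral_map hZ (integrable_measureReal_prodMk_mul hh hs).aestronglyMeasurable]

end Disintegration

theorem conditional_kernel_bias_bound_general
    {Ω : Type*} [MeasurableSpace Ω] (μ : Measure Ω) [IsProbabilityMeasure μ]
    {k : ℕ}
    (Z : Ω → EuclideanSpace ℝ (Fin k)) (hZ : Measurable Z)
    (X : Ω → ℝ) (hX : Measurable X)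
    (K : ℝ)
    (κ : Kernel (EuclideanSpace ℝ (Fin k)) ℝ) [IsMarkovKernel κ]
    (f : EuclideanSpace ℝ (Fin k) → ℝ → ℝ)
    (hfnn : ∀ z x, 0 ≤ f z x)
    (hjoint : Measure.map (fun ω => (Z ω, X ω)) μ = (Measure.map Z μ).compProd κ)
    (hdens : ∀ᵐ z ∂(Measure.map Z μ),
      κ z = (volume : Measure ℝ).withDensity (fun x => ENNReal.ofReal (f z x))
        ∧ ∀ x x' : ℝ, |f z x - f z x'| ≤ K * |x - x'|) :
    ∀ v : EuclideanSpace ℝ (Fin k) → ℝ, Measurable v →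
    ∀ W : EuclideanSpace ℝ (Fin k) → ℝ, Measurable W →
      Integrable (fun ω => W (Z ω)) μ →
      Integrable (fun ω => W (Z ω) * f (Z ω) (v (Z ω))) μ →
    ∀ c > (0 : ℝ),
      |(∫ ω, W (Z ω) * (2 * c)⁻¹ * (if |X ω - v (Z ω)| < c then (1 : ℝ) else 0) ∂μ)
        - ∫ ω, W (Z ω) * f (Z ω) (v (Z ω)) ∂μ|
      ≤ K * c * ∫ ω, |W (Z ω)| ∂μ := by
  intro v hv W hW hWZ hWf c hc
  set s : Set (EuclideanSpace ℝ (Fin k) × ℝ) := {p | |p.2 - v p.1| < c}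
  have hs : MeasurableSet s :=
    measurableSet_lt (measurable_snd.sub (hv.comp measurable_fst)).abs measurable_const
  have hsec (z : EuclideanSpace ℝ (Fin k)) : Prod.mk z ⁻¹' s = Metric.ball (v z) c := by
    ext; simp [s, Real.dist_eq]
  have hh : Integrable (fun z => W z * (2 * c)⁻¹) (μ.map Z) :=
    ((integrable_map_measure hW.aestronglyMeasurable hZ.aemeasurable).2 hWZ).mul_const _
  have hcond := integral_indicator_comp_eq_of_map_eq_compProd hZ.aemeasurable hX.aemeasurable
    hjoint hh hs
  have hcond_int := (integrable_measureReal_prodMk_mul (κ := κ) hh hs).comp_aemeasurable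
    hZ.aemeasurable
  simp only [hsec, Function.comp_def] at hcond hcond_int
  have hfirst : ∫ ω, W (Z ω) * (2 * c)⁻¹ * (if |X ω - v (Z ω)| < c then (1 : ℝ) else 0) ∂μ
      = ∫ ω, (κ (Z ω)).real (Metric.ball (v (Z ω)) c) * (W (Z ω) * (2 * c)⁻¹) ∂μ := by
    rw [← hcond]
    congr with ω
    simp [s, Set.indicator_apply]
  have hbias : ∀ᵐ ω ∂μ, ‖(κ (Z ω)).real (Metric.ball (v (Z ω)) c) * (W (Z ω) * (2 * c)⁻¹)
      - W (Z ω) * f (Z ω) (v (Z ω))‖ ≤ K * c * |W (Z ω)| := by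
    filter_upwards [ae_of_ae_map hZ.aemeasurable hdens] with ω ⟨hκ, hlip⟩
    have hloc := abs_inv_two_mul_withDensity_ball_sub_le (hfnn (Z ω)) hlip (v (Z ω)) hc
    rw [← hκ] at hloc
    calc _ = |W (Z ω)|
          * |(2 * c)⁻¹ * (κ (Z ω)).real (Metric.ball (v (Z ω)) c) - f (Z ω) (v (Z ω))| := by
          rw [Real.norm_eq_abs, ← abs_mul]; congr 1; ring
      _ ≤ |W (Z ω)| * (K * c) := by gcongr
      _ = K * c * |W (Z ω)| := mul_comm _ _
  rw [hfirst, ← integral_sub hcond_int hWf, ← integral_const_mul]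
  exact norm_integral_le_of_norm_le (hWZ.abs.const_mul _) hbias

/-- Conditional kernel-bias bound with a random center `v(Z)` and `𝓖`-measurable weight
`W(Z)`: if the joint law of `(Z,X)` is `ν ⊗ₘ κ`, where `κ z` has a Lebesgue density
`f(z,·)` that is `K`-Lipschitz for `ν`-a.e. `z`, then for every measurable `v`, every
integrable `W` (with `W(Z)·f(Z,v(Z))` integrable), and every bandwidth `c > 0`,
`|E[W(Z)·(2c)⁻¹·1{|X − v(Z)| < c}] − E[W(Z)·f(Z,v(Z))]| ≤ K·c·E[|W(Z)|]`. -/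
theorem conditional_kernel_bias_bound
    {Ω : Type*} [MeasurableSpace Ω] (μ : Measure Ω) [IsProbabilityMeasure μ]
    {k : ℕ}
    (Z : Ω → EuclideanSpace ℝ (Fin k)) (hZ : Measurable Z)
    (X : Ω → ℝ) (hX : Measurable X)
    (K : ℝ)
    (κ : Kernel (EuclideanSpace ℝ (Fin k)) ℝ) [IsMarkovKernel κ]
    (f : EuclideanSpace ℝ (Fin k) → ℝ → ℝ)
    (hfmeas : Measurable fun zx : EuclideanSpace ℝ (Fin k) × ℝ => f zx.1 zx.2)
    (hfnn : ∀ z x, 0 ≤ f z x)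
    (hjoint : Measure.map (fun ω => (Z ω, X ω)) μ = (Measure.map Z μ).compProd κ)
    (hdens : ∀ᵐ z ∂(Measure.map Z μ),
      κ z = (volume : Measure ℝ).withDensity (fun x => ENNReal.ofReal (f z x))
        ∧ ∀ x x' : ℝ, |f z x - f z x'| ≤ K * |x - x'|) :
    ∀ v : EuclideanSpace ℝ (Fin k) → ℝ, Measurable v →
    ∀ W : EuclideanSpace ℝ (Fin k) → ℝ, Measurable W →
      Integrable (fun ω => W (Z ω)) μ →
      Integrable (fun ω => W (Z ω) * f (Z ω) (v (Z ω))) μ →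
    ∀ c > (0 : ℝ),
      |(∫ ω, W (Z ω) * (2 * c)⁻¹ * (if |X ω - v (Z ω)| < c then (1 : ℝ) else 0) ∂μ)
        - ∫ ω, W (Z ω) * f (Z ω) (v (Z ω)) ∂μ|
      ≤ K * c * ∫ ω, |W (Z ω)| ∂μ :=
  conditional_kernel_bias_bound_general μ Z hZ X hX K κ f hfnn hjoint hdens
end

section
/- Let (Ω, 𝓐, μ) be a probability space with Z : Ω → ℝᵏ and X, Y : Ω → ℝ measurable, and suppose X has a conditional density bounded by K given Z. Let Θᵐ ⊆ ℝ^q be compact and let m : ℝᵏ × ℝ^q → ℝ be measurable with θᵐ ↦ m(z,θᵐ) continuous and sup_{θᵐ∈Θᵐ} |m(z,θᵐ)| ≤ M(z). Let θ₀ᵛ ∈ ℝᵖ and δ₀ > 0, and let v : ℝᵏ × ℝᵖ → ℝ be measurable with θᵛ ↦ v(z,θᵛ) continuously differentiable on the closed ball of radius δ₀ around θ₀ᵛ, with ‖∇v(z,θᵛ)‖ ≤ V₁(z) there. Assume E[M(Z)⁴] ≤ K, E[V₁(Z)²] ≤ K, E[V₁(Z)] ≤ K, and E[|Y|^{2q}]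 ≤ K for some q > 1. Then there exists a constant C > 0 such that for every δ ∈ (0, δ₀] there is a measurable function g : Ω → [0,∞) with: for μ-almost every ω, |S^MES((v(Z(ω),θᵛ), m(Z(ω),θᵐ)), (X(ω),Y(ω))) − S^MES((v(Z(ω),θ₀ᵛ), m(Z(ω),θᵐ)), (X(ω),Y(ω)))| ≤ g(ω) for all θᵐ ∈ Θᵐ and all θᵛ with ‖θᵛ − θ₀ᵛ‖ ≤ δ, and E[g] ≤ C·(δ + δ^{(q−1)/q}). -/
open MeasureTheory ProbabilityTheory

/-- The MES loss `S^MES((v,m),(x,y)) = (1/2)·1{x > v}·(y − m)²`. -/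
noncomputable def SMES (v m x y : ℝ) : ℝ :=
  (1 / 2) * (if v < x then (1 : ℝ) else 0) * (y - m) ^ 2

/-!
The two losses differ only when `X` lies between `v(Z, θᵛ)` and `v(Z, θ₀ᵛ)`, hence, by the mean
value theorem, within `V₁(Z)·δ` of `v(Z, θ₀ᵛ)`; the difference is then at most `Y² + M(Z)²`.
Given `Z`, the bounded conditional density puts mass at most `2K·V₁(Z)·δ` on this band. The `Y²`
factor is handled by truncation at `T = δ^(-1/q)`: `Y² ≤ T + T^(1-q)·|Y|^(2q)` with
`T·δ = T^(1-q) = δ^((q-1)/q)`, so the band contributes `2Kδ·E[(T + M(Z)²)·V₁(Z)]` and the tail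
`δ^((q-1)/q)·E|Y|^(2q)`; finally `E[M(Z)²·V₁(Z)] ≤ (E[M(Z)⁴] + E[V₁(Z)²])/2`.
-/

open Metric

section

variable {α Ω : Type*} [MeasurableSpace α] [MeasurableSpace Ω]

lemma integrable_of_lintegral_ofReal_le {μ : Measure Ω} {F G : Ω → ℝ}
    (hF : AEStronglyMeasurable F μ) (hF0 : 0 ≤ᵐ[μ] F) (hG : Integrable G μ)
    (h : ∫⁻ ω, ENNReal.ofReal (F ω) ∂μ ≤ ∫⁻ ω, ENNReal.ofReal (G ω) ∂μ) :
    Integrable F μ :=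
  ⟨hF, (hasFiniteIntegral_iff_ofReal hF0).2
    (h.trans_lt ((lintegral_ofReal_le_lintegral_enorm G).trans_lt hG.2))⟩

lemma integral_le_of_lintegral_ofReal_le {μ : Measure Ω} {F G : Ω → ℝ}
    (hF : AEStronglyMeasurable F μ) (hF0 : 0 ≤ᵐ[μ] F) (hG : Integrable G μ) (hG0 : 0 ≤ᵐ[μ] G)
    (h : ∫⁻ ω, ENNReal.ofReal (F ω) ∂μ ≤ ∫⁻ ω, ENNReal.ofReal (G ω) ∂μ) :
    ∫ ω, F ω ∂μ ≤ ∫ ω, G ω ∂μ := by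
  rw [integral_eq_lintegral_of_nonneg_ae hF0 hF, integral_eq_lintegral_of_nonneg_ae hG0 hG.1]
  exact ENNReal.toReal_mono ((hasFiniteIntegral_iff_ofReal hG0).1 hG.2).ne h

lemma integrable_mul_of_integrable_sq {μ : Measure Ω} {f g : Ω → ℝ}
    (hf : AEStronglyMeasurable f μ) (hg : AEStronglyMeasurable g μ)
    (hf2 : Integrable (fun ω => f ω ^ 2) μ) (hg2 : Integrable (fun ω => g ω ^ 2) μ) :
    Integrable (fun ω => f ω * g ω) μ :=
  ((memLp_two_iff_integrable_sq hf).2 hf2).integrable_mul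
    ((memLp_two_iff_integrable_sq hg).2 hg2)

lemma integral_mul_le_half_integral_add_sq {μ : Measure Ω} {f g : Ω → ℝ}
    (hf : AEStronglyMeasurable f μ) (hg : AEStronglyMeasurable g μ)
    (hf2 : Integrable (fun ω => f ω ^ 2) μ) (hg2 : Integrable (fun ω => g ω ^ 2) μ) :
    ∫ ω, f ω * g ω ∂μ ≤ (∫ ω, f ω ^ 2 ∂μ + ∫ ω, g ω ^ 2 ∂μ) / 2 := by
  rw [← integral_add hf2 hg2, ← integral_div]
  exact integral_mono (integrable_mul_of_integrable_sq hf hg hf2 hg2) ((hf2.add hg2).div_const 2)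
    fun ω => by nlinarith [sq_nonneg (f ω - g ω)]

lemma integrable_sq_mul_and_integral_le {μ : Measure Ω} {f g : Ω → ℝ} {K : ℝ}
    (hf : AEStronglyMeasurable f μ) (hg : AEStronglyMeasurable g μ)
    (hf4 : Integrable (fun ω => f ω ^ 4) μ) (hf4K : ∫ ω, f ω ^ 4 ∂μ ≤ K)
    (hg2 : Integrable (fun ω => g ω ^ 2) μ) (hg2K : ∫ ω, g ω ^ 2 ∂μ ≤ K) :
    Integrable (fun ω => f ω ^ 2 * g ω) μ ∧ ∫ ω, f ω ^ 2 * g ω ∂μ ≤ K := by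
  have hf2 : AEStronglyMeasurable (fun ω => f ω ^ 2) μ := hf.pow 2
  have hf4' : Integrable (fun ω => (f ω ^ 2) ^ 2) μ := by simpa only [← pow_mul] using hf4
  refine ⟨integrable_mul_of_integrable_sq hf2 hg hf4' hg2, ?_⟩
  have := integral_mul_le_half_integral_add_sq hf2 hg hf4' hg2
  simp only [← pow_mul] at this
  linarith

lemma measurable_indicator_closedBall {β : Type*} [Zero β] [MeasurableSpace β]
    {w : α → β} {c r : α → ℝ} (hw : Measurable w) (hc : Measurable c) (hr : Measurable r) :
    Measurable fun p : α × ℝ => (closedBall (c p.1) (r p.1)).indicator (fun _ => w p.1) p.2 :=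
  Measurable.ite (measurableSet_le (measurable_snd.dist (hc.comp measurable_fst))
    (hr.comp measurable_fst)) (hw.comp measurable_fst) measurable_const

lemma withDensity_closedBall_le {f : ℝ → ℝ} {K : ℝ} (hK : 0 ≤ K) (hf : ∀ x, f x ≤ K)
    (c r : ℝ) :
    volume.withDensity (fun x => ENNReal.ofReal (f x)) (closedBall c r)
      ≤ ENNReal.ofReal (2 * K * r) := by
  rw [withDensity_apply _ measurableSet_closedBall]
  calc ∫⁻ x in closedBall c r, ENNReal.ofReal (f x)
      ≤ ∫⁻ _ in closedBall c r, ENNReal.ofReal K :=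
        setLIntegral_mono measurable_const fun x _ => ENNReal.ofReal_le_ofReal (hf x)
    _ = ENNReal.ofReal (2 * K * r) := by
        rw [setLIntegral_const, Real.volume_closedBall, ← ENNReal.ofReal_mul hK]
        ring_nf

lemma lintegral_indicator_closedBall_le {μ : Measure Ω} [SFinite μ] {Z : Ω → α} {X : Ω → ℝ}
    (hZ : Measurable Z) (hX : Measurable X) {κ : Kernel α ℝ} [IsSFiniteKernel κ]
    {f : α → ℝ → ℝ} {K : ℝ} (hK : 0 ≤ K)
    (hjoint : μ.map (fun ω => (Z ω, X ω)) = (μ.map Z).compProd κ)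
    (hdens : ∀ᵐ z ∂μ.map Z,
      κ z = volume.withDensity (fun x => ENNReal.ofReal (f z x)) ∧ ∀ x, f z x ≤ K)
    {w : α → ENNReal} {c r : α → ℝ} (hw : Measurable w) (hc : Measurable c) (hr : Measurable r) :
    ∫⁻ ω, (closedBall (c (Z ω)) (r (Z ω))).indicator (fun _ => w (Z ω)) (X ω) ∂μ
      ≤ ∫⁻ ω, w (Z ω) * ENNReal.ofReal (2 * K * r (Z ω)) ∂μ := by
  have hF := measurable_indicator_closedBall hw hc hr
  calc ∫⁻ ω, (closedBall (c (Z ω)) (r (Z ω))).indicator (fun _ => w (Z ω)) (X ω) ∂μ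
      = ∫⁻ z, ∫⁻ x, (closedBall (c z) (r z)).indicator (fun _ => w z) x ∂κ z ∂μ.map Z := by
        rw [← Measure.lintegral_compProd hF, ← hjoint, lintegral_map hF (hZ.prodMk hX)]
    _ = ∫⁻ z, w z * κ z (closedBall (c z) (r z)) ∂μ.map Z := by
        simp only [lintegral_indicator_const measurableSet_closedBall]
    _ ≤ ∫⁻ z, w z * ENNReal.ofReal (2 * K * r z) ∂μ.map Z := by
        refine lintegral_mono_ae ?_
        filter_upwards [hdens] with z ⟨hκ, hfK⟩
        rw [hκ]
        gcongr
        exact withDensity_closedBall_le hK hfK _ _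
    _ = ∫⁻ ω, w (Z ω) * ENNReal.ofReal (2 * K * r (Z ω)) ∂μ :=
        lintegral_map (hw.mul (ENNReal.measurable_ofReal.comp (hr.const_mul _))) hZ

theorem integral_indicator_closedBall_le {μ : Measure Ω} [SFinite μ] {Z : Ω → α} {X : Ω → ℝ}
    (hZ : Measurable Z) (hX : Measurable X) {κ : Kernel α ℝ} [IsSFiniteKernel κ]
    {f : α → ℝ → ℝ} {K : ℝ} (hK : 0 ≤ K)
    (hjoint : μ.map (fun ω => (Z ω, X ω)) = (μ.map Z).compProd κ)
    (hdens : ∀ᵐ z ∂μ.map Z,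
      κ z = volume.withDensity (fun x => ENNReal.ofReal (f z x)) ∧ ∀ x, f z x ≤ K)
    {w c r : α → ℝ} (hw : Measurable w) (hc : Measurable c) (hr : Measurable r)
    (hw0 : ∀ z, 0 ≤ w z) (hr0 : ∀ z, 0 ≤ r z)
    (hwr : Integrable (fun ω => w (Z ω) * r (Z ω)) μ) :
    Integrable (fun ω => (closedBall (c (Z ω)) (r (Z ω))).indicator (fun _ => w (Z ω)) (X ω)) μ ∧
      ∫ ω, (closedBall (c (Z ω)) (r (Z ω))).indicator (fun _ => w (Z ω)) (X ω) ∂μ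
        ≤ 2 * K * ∫ ω, w (Z ω) * r (Z ω) ∂μ := by
  have hF : AEStronglyMeasurable
      (fun ω => (closedBall (c (Z ω)) (r (Z ω))).indicator (fun _ => w (Z ω)) (X ω)) μ :=
    ((measurable_indicator_closedBall hw hc hr).comp (hZ.prodMk hX)).aestronglyMeasurable
  have hF0 : 0 ≤ᵐ[μ]
      fun ω => (closedBall (c (Z ω)) (r (Z ω))).indicator (fun _ => w (Z ω)) (X ω) :=
    ae_of_all μ fun ω => Set.indicator_nonneg (fun _ _ => hw0 (Z ω)) (X ω)
  have hG0 : 0 ≤ᵐ[μ] fun ω => 2 * K * (w (Z ω) * r (Z ω)) :=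
    ae_of_all μ fun ω => by have := hw0 (Z ω); have := hr0 (Z ω); positivity
  have hlin : ∫⁻ ω, ENNReal.ofReal
        ((closedBall (c (Z ω)) (r (Z ω))).indicator (fun _ => w (Z ω)) (X ω)) ∂μ
      ≤ ∫⁻ ω, ENNReal.ofReal (2 * K * (w (Z ω) * r (Z ω))) ∂μ := by
    calc _ = ∫⁻ ω, (closedBall (c (Z ω)) (r (Z ω))).indicator
          (fun _ => ENNReal.ofReal (w (Z ω))) (X ω) ∂μ :=
          lintegral_congr fun ω => by unfold Set.indicator; split_ifs <;> simp
      _ ≤ ∫⁻ ω, ENNReal.ofReal (w (Z ω)) * ENNReal.ofReal (2 * K * r (Z ω)) ∂μ :=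
          lintegral_indicator_closedBall_le hZ hX hK hjoint hdens
            (ENNReal.measurable_ofReal.comp hw) hc hr
      _ = ∫⁻ ω, ENNReal.ofReal (2 * K * (w (Z ω) * r (Z ω))) ∂μ :=
          lintegral_congr fun ω => by rw [← ENNReal.ofReal_mul (hw0 _)]; ring_nf
  rw [← integral_const_mul]
  exact ⟨integrable_of_lintegral_ofReal_le hF hF0 (hwr.const_mul _) hlin,
    integral_le_of_lintegral_ofReal_le hF hF0 (hwr.const_mul _) hG0 hlin⟩

end

lemma le_add_rpow_mul_rpow {s T q : ℝ} (hs : 0 ≤ s) (hT : 0 < T) (hq : 1 ≤ q) :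
    s ≤ T + T ^ (1 - q) * s ^ q := by
  have htail : 0 ≤ T ^ (1 - q) * s ^ q :=
    mul_nonneg (Real.rpow_nonneg hT.le _) (Real.rpow_nonneg hs _)
  rcases le_or_gt s T with hsT | hTs
  · linarith
  calc s = T ^ (1 - q) * (s * T ^ (q - 1)) := by
        rw [mul_left_comm, ← Real.rpow_add hT]; simp
    _ ≤ T ^ (1 - q) * (s * s ^ (q - 1)) := by gcongr
    _ = T ^ (1 - q) * s ^ q := by
        rw [← Real.rpow_one_add' hs (by linarith), add_sub_cancel]
    _ ≤ T + T ^ (1 - q) * s ^ q := by linarith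

lemma abs_sub_le_of_norm_fderivWithin_closedBall_le {E : Type*} [NormedAddCommGroup E]
    [NormedSpace ℝ E] {g : E → ℝ} {x₀ x : E} {R δ V : ℝ}
    (hg : DifferentiableOn ℝ g (closedBall x₀ R))
    (hV : ∀ y ∈ closedBall x₀ R, ‖fderivWithin ℝ g (closedBall x₀ R) y‖ ≤ V)
    (hx : ‖x - x₀‖ ≤ δ) (hδR : δ ≤ R) :
    |g x - g x₀| ≤ V * δ := by
  have hx₀ : x₀ ∈ closedBall x₀ R := mem_closedBall_self ((norm_nonneg _).trans (hx.trans hδR))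
  have hxR : x ∈ closedBall x₀ R := by rw [mem_closedBall, dist_eq_norm]; linarith
  have hV0 : 0 ≤ V := (norm_nonneg _).trans (hV x₀ hx₀)
  calc |g x - g x₀| ≤ V * ‖x - x₀‖ :=
        (convex_closedBall x₀ R).norm_image_sub_le_of_norm_fderivWithin_le hg hV hx₀ hxR
    _ ≤ V * δ := by gcongr

lemma SMES_nonneg (v m x y : ℝ) : 0 ≤ SMES v m x y := by
  unfold SMES; split_ifs <;> positivity

lemma SMES_le (v m x y : ℝ) : SMES v m x y ≤ (y - m) ^ 2 / 2 := by
  unfold SMES; split_ifs <;> nlinarith [sq_nonneg (y - m)]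

lemma SMES_eq_of_lt_dist {a b m x y r : ℝ} (hab : |a - b| ≤ r) (hx : r < dist x b) :
    SMES a m x y = SMES b m x y := by
  have hside : a < x ↔ b < x := by
    rw [Real.dist_eq] at hx
    cases abs_le.1 hab; rcases lt_abs.1 hx with h | h <;> constructor <;> intro <;> linarith
  simp only [SMES, hside]

lemma abs_SMES_sub_SMES_le_indicator {a b m x y r : ℝ} (hab : |a - b| ≤ r) :
    |SMES a m x y - SMES b m x y| ≤ (closedBall b r).indicator (fun _ => (y - m) ^ 2 / 2) x := by
  by_cases hx : x ∈ closedBall b r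
  · rw [Set.indicator_of_mem hx]
    exact abs_sub_le_of_nonneg_of_le (SMES_nonneg ..) (SMES_le ..) (SMES_nonneg ..) (SMES_le ..)
  · rw [Set.indicator_of_notMem hx, SMES_eq_of_lt_dist hab (not_le.1 hx), sub_self, abs_zero]

lemma abs_SMES_sub_SMES_le_of_abs_le {a b m x y r M T q : ℝ} (hab : |a - b| ≤ r)
    (hm : |m| ≤ M) (hT : 0 < T) (hq : 1 ≤ q) :
    |SMES a m x y - SMES b m x y|
      ≤ (closedBall b r).indicator (fun _ => T + M ^ 2) x + T ^ (1 - q) * |y| ^ (2 * q) := by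
  have htail : 0 ≤ T ^ (1 - q) * |y| ^ (2 * q) :=
    mul_nonneg (Real.rpow_nonneg hT.le _) (Real.rpow_nonneg (abs_nonneg y) _)
  refine (abs_SMES_sub_SMES_le_indicator hab).trans ?_
  by_cases hx : x ∈ closedBall b r
  · have hy : y ^ 2 ≤ T + T ^ (1 - q) * |y| ^ (2 * q) := by
      rw [Real.rpow_mul (abs_nonneg y), Real.rpow_two, sq_abs]
      exact le_add_rpow_mul_rpow (sq_nonneg y) hT hq
    simp only [Set.indicator_of_mem hx]
    nlinarith [abs_nonneg m, sq_abs m, sq_nonneg (y + m)]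
  · simpa only [Set.indicator_of_notMem hx, zero_add] using htail

theorem mes_criterion_L1_continuity_general
    {Ω : Type*} [MeasurableSpace Ω] (μ : Measure Ω) [IsProbabilityMeasure μ]
    {k p d : ℕ}
    (Z : Ω → EuclideanSpace ℝ (Fin k)) (hZ : Measurable Z)
    (X Y : Ω → ℝ) (hX : Measurable X) (hY : Measurable Y)
    (K : ℝ)
    (κ : Kernel (EuclideanSpace ℝ (Fin k)) ℝ) [IsMarkovKernel κ]
    (f : EuclideanSpace ℝ (Fin k) → ℝ → ℝ)
    (hjoint : Measure.map (fun ω => (Z ω, X ω)) μ = (Measure.map Z μ).compProd κ)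
    (hdens : ∀ᵐ z ∂(Measure.map Z μ),
      κ z = (volume : Measure ℝ).withDensity (fun x => ENNReal.ofReal (f z x))
        ∧ ∀ x, f z x ≤ K)
    (Θm : Set (EuclideanSpace ℝ (Fin d)))
    (m : EuclideanSpace ℝ (Fin k) → EuclideanSpace ℝ (Fin d) → ℝ)
    (M : EuclideanSpace ℝ (Fin k) → ℝ) (hMmeas : Measurable M)
    (hMbd : ∀ z, ∀ θm1 ∈ Θm, |m z θm1| ≤ M z)
    (θ₀v : EuclideanSpace ℝ (Fin p)) (δ₀ : ℝ) (hδ₀ : 0 < δ₀)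
    (v : EuclideanSpace ℝ (Fin k) → EuclideanSpace ℝ (Fin p) → ℝ)
    (hvmeas : Measurable
      (fun zθ : EuclideanSpace ℝ (Fin k) × EuclideanSpace ℝ (Fin p) => v zθ.1 zθ.2))
    (hvC1 : ∀ z, ContDiffOn ℝ 1 (v z) (Metric.closedBall θ₀v δ₀))
    (V₁ : EuclideanSpace ℝ (Fin k) → ℝ) (hV₁meas : Measurable V₁)
    (hV₁bd : ∀ z, ∀ θv1 ∈ Metric.closedBall θ₀v δ₀,
      ‖fderivWithin ℝ (v z) (Metric.closedBall θ₀v δ₀) θv1‖ ≤ V₁ z)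
    (q : ℝ) (hq : 1 < q)
    (hM4int : Integrable (fun ω => M (Z ω) ^ 4) μ) (hM4K : ∫ ω, M (Z ω) ^ 4 ∂μ ≤ K)
    (hV₁sqint : Integrable (fun ω => V₁ (Z ω) ^ 2) μ) (hV₁sqK : ∫ ω, V₁ (Z ω) ^ 2 ∂μ ≤ K)
    (hV₁int : Integrable (fun ω => V₁ (Z ω)) μ) (hV₁K : ∫ ω, V₁ (Z ω) ∂μ ≤ K)
    (hYint : Integrable (fun ω => |Y ω| ^ (2 * q)) μ) (hYK : ∫ ω, |Y ω| ^ (2 * q) ∂μ ≤ K) :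
    ∃ C > (0 : ℝ), ∀ δ ∈ Set.Ioc (0 : ℝ) δ₀,
      ∃ g : Ω → ℝ, Measurable g ∧ (∀ ω, 0 ≤ g ω) ∧
        (∀ᵐ ω ∂μ, ∀ θm1 ∈ Θm, ∀ θv1 : EuclideanSpace ℝ (Fin p), ‖θv1 - θ₀v‖ ≤ δ →
          |SMES (v (Z ω) θv1) (m (Z ω) θm1) (X ω) (Y ω)
            - SMES (v (Z ω) θ₀v) (m (Z ω) θm1) (X ω) (Y ω)| ≤ g ω) ∧
        Integrable g μ ∧
        ∫ ω, g ω ∂μ ≤ C * (δ + δ ^ ((q - 1) / q)) := by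
  have hV₁nn : ∀ z, 0 ≤ V₁ z := fun z =>
    (norm_nonneg _).trans (hV₁bd z θ₀v (mem_closedBall_self hδ₀.le))
  have hK : 0 ≤ K := (integral_nonneg fun ω => hV₁nn (Z ω)).trans hV₁K
  obtain ⟨hM2V₁int, hM2V₁K⟩ := integrable_sq_mul_and_integral_le (f := fun ω => M (Z ω))
    (g := fun ω => V₁ (Z ω)) (hMmeas.comp hZ).aestronglyMeasurable
    (hV₁meas.comp hZ).aestronglyMeasurable hM4int hM4K hV₁sqint hV₁sqK
  refine ⟨2 * K ^ 2 + K + 1, by positivity, fun δ ⟨hδ, hδδ₀⟩ => ?_⟩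
  set T := δ ^ (-q⁻¹)
  have hT : 0 < T := Real.rpow_pos_of_pos hδ _
  have hTδ : T * δ = δ ^ ((q - 1) / q) := by
    rw [← Real.rpow_add_one hδ.ne']; congr 1; field_simp; ring
  have hTq : T ^ (1 - q) = δ ^ ((q - 1) / q) := by
    rw [← Real.rpow_mul hδ.le]; congr 1; field_simp; ring
  have hw : Measurable fun z => T + M z ^ 2 := measurable_const.add (hMmeas.pow_const 2)
  have hc : Measurable fun z => v z θ₀v := hvmeas.comp (measurable_id.prodMk measurable_const)
  have hr : Measurable fun z => V₁ z * δ := hV₁meas.mul_const δ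
  have hwr : Integrable (fun ω => (T + M (Z ω) ^ 2) * (V₁ (Z ω) * δ)) μ :=
    (((hV₁int.const_mul T).add hM2V₁int).mul_const δ).congr
      (ae_of_all _ fun ω => by simp only [Pi.add_apply]; ring)
  have hwr_le : ∫ ω, (T + M (Z ω) ^ 2) * (V₁ (Z ω) * δ) ∂μ ≤ (T * K + K) * δ :=
    calc _ = (T * ∫ ω, V₁ (Z ω) ∂μ + ∫ ω, M (Z ω) ^ 2 * V₁ (Z ω) ∂μ) * δ := by
          rw [← integral_const_mul, ← integral_add (hV₁int.const_mul T) hM2V₁int,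
            ← integral_mul_const]
          exact integral_congr_ae (ae_of_all _ fun ω => by ring)
      _ ≤ (T * K + K) * δ := by gcongr
  obtain ⟨hFint, hF⟩ := integral_indicator_closedBall_le hZ hX hK hjoint hdens hw hc hr
    (fun z => by positivity) (fun z => mul_nonneg (hV₁nn z) hδ.le) hwr
  refine ⟨fun ω => (closedBall (v (Z ω) θ₀v) (V₁ (Z ω) * δ)).indicator
      (fun _ => T + M (Z ω) ^ 2) (X ω) + T ^ (1 - q) * |Y ω| ^ (2 * q),
    ((measurable_indicator_closedBall hw hc hr).comp (hZ.prodMk hX)).add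
      (measurable_const.mul (hY.abs.pow_const _)),
    fun ω => add_nonneg (Set.indicator_nonneg (fun _ _ => by positivity) _) (by positivity),
    ae_of_all _ fun ω θm1 hθm1 θv1 hθv1 => abs_SMES_sub_SMES_le_of_abs_le
      (abs_sub_le_of_norm_fderivWithin_closedBall_le ((hvC1 _).differentiableOn one_ne_zero)
        (hV₁bd _) hθv1 hδδ₀) (hMbd _ _ hθm1) hT hq.le,
    hFint.add (hYint.const_mul _), ?_⟩
  rw [integral_add hFint (hYint.const_mul _), integral_const_mul, hTq]
  have htail : δ ^ ((q - 1) / q) * ∫ ω, |Y ω| ^ (2 * q) ∂μ ≤ δ ^ ((q - 1) / q) * K := by gcongr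
  have hband : 2 * K * ((T * K + K) * δ) = 2 * K ^ 2 * δ ^ ((q - 1) / q) + 2 * K ^ 2 * δ := by
    rw [← hTδ]; ring
  nlinarith [mul_le_mul_of_nonneg_left hwr_le (by positivity : (0 : ℝ) ≤ 2 * K),
    mul_nonneg hK hδ.le, Real.rpow_nonneg hδ.le ((q - 1) / q)]

/-- Uniform L¹-continuity of the MES criterion in the VaR parameter (the bound on the
term B₁ₙ in the proof of Proposition 1): under a conditional density of `X` given `Z`
bounded by `K`, envelope bounds `M` on the MES model over the compact `Θᵐ` and `V₁` on
the gradient of the VaR model on the closed `δ₀`-ball around `θ₀ᵛ`, and the stated moment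
bounds, there is `C > 0` such that for every `δ ∈ (0, δ₀]` the oscillation of the MES
loss over `‖θᵛ − θ₀ᵛ‖ ≤ δ`, uniformly in `θᵐ ∈ Θᵐ`, is dominated by an integrable `g`
with `E[g] ≤ C·(δ + δ^{(q−1)/q})`. -/
theorem mes_criterion_L1_continuity
    {Ω : Type*} [MeasurableSpace Ω] (μ : Measure Ω) [IsProbabilityMeasure μ]
    {k p d : ℕ}
    (Z : Ω → EuclideanSpace ℝ (Fin k)) (hZ : Measurable Z)
    (X Y : Ω → ℝ) (hX : Measurable X) (hY : Measurable Y)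
    (K : ℝ)
    (κ : Kernel (EuclideanSpace ℝ (Fin k)) ℝ) [IsMarkovKernel κ]
    (f : EuclideanSpace ℝ (Fin k) → ℝ → ℝ)
    (hfmeas : Measurable fun zx : EuclideanSpace ℝ (Fin k) × ℝ => f zx.1 zx.2)
    (hfnn : ∀ z x, 0 ≤ f z x)
    (hjoint : Measure.map (fun ω => (Z ω, X ω)) μ = (Measure.map Z μ).compProd κ)
    (hdens : ∀ᵐ z ∂(Measure.map Z μ),
      κ z = (volume : Measure ℝ).withDensity (fun x => ENNReal.ofReal (f z x))
        ∧ ∀ x, f z x ≤ K)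
    (Θm : Set (EuclideanSpace ℝ (Fin d))) (hΘm : IsCompact Θm)
    (m : EuclideanSpace ℝ (Fin k) → EuclideanSpace ℝ (Fin d) → ℝ)
    (hmmeas : Measurable
      (fun zθ : EuclideanSpace ℝ (Fin k) × EuclideanSpace ℝ (Fin d) => m zθ.1 zθ.2))
    (hmcont : ∀ z, Continuous (m z))
    (M : EuclideanSpace ℝ (Fin k) → ℝ) (hMmeas : Measurable M)
    (hMbd : ∀ z, ∀ θm1 ∈ Θm, |m z θm1| ≤ M z)
    (θ₀v : EuclideanSpace ℝ (Fin p)) (δ₀ : ℝ) (hδ₀ : 0 < δ₀)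
    (v : EuclideanSpace ℝ (Fin k) → EuclideanSpace ℝ (Fin p) → ℝ)
    (hvmeas : Measurable
      (fun zθ : EuclideanSpace ℝ (Fin k) × EuclideanSpace ℝ (Fin p) => v zθ.1 zθ.2))
    (hvC1 : ∀ z, ContDiffOn ℝ 1 (v z) (Metric.closedBall θ₀v δ₀))
    (V₁ : EuclideanSpace ℝ (Fin k) → ℝ) (hV₁meas : Measurable V₁)
    (hV₁bd : ∀ z, ∀ θv1 ∈ Metric.closedBall θ₀v δ₀,
      ‖fderivWithin ℝ (v z) (Metric.closedBall θ₀v δ₀) θv1‖ ≤ V₁ z)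
    (q : ℝ) (hq : 1 < q)
    (hM4int : Integrable (fun ω => M (Z ω) ^ 4) μ) (hM4K : ∫ ω, M (Z ω) ^ 4 ∂μ ≤ K)
    (hV₁sqint : Integrable (fun ω => V₁ (Z ω) ^ 2) μ) (hV₁sqK : ∫ ω, V₁ (Z ω) ^ 2 ∂μ ≤ K)
    (hV₁int : Integrable (fun ω => V₁ (Z ω)) μ) (hV₁K : ∫ ω, V₁ (Z ω) ∂μ ≤ K)
    (hYint : Integrable (fun ω => |Y ω| ^ (2 * q)) μ) (hYK : ∫ ω, |Y ω| ^ (2 * q) ∂μ ≤ K) :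
    ∃ C > (0 : ℝ), ∀ δ ∈ Set.Ioc (0 : ℝ) δ₀,
      ∃ g : Ω → ℝ, Measurable g ∧ (∀ ω, 0 ≤ g ω) ∧
        (∀ᵐ ω ∂μ, ∀ θm1 ∈ Θm, ∀ θv1 : EuclideanSpace ℝ (Fin p), ‖θv1 - θ₀v‖ ≤ δ →
          |SMES (v (Z ω) θv1) (m (Z ω) θm1) (X ω) (Y ω)
            - SMES (v (Z ω) θ₀v) (m (Z ω) θm1) (X ω) (Y ω)| ≤ g ω) ∧
        Integrable g μ ∧
        ∫ ω, g ω ∂μ ≤ C * (δ + δ ^ ((q - 1) / q)) :=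
  mes_criterion_L1_continuity_general μ Z hZ X Y hX hY K κ f hjoint hdens Θm m M hMmeas hMbd θ₀v δ₀
    hδ₀ v hvmeas hvC1 V₁ hV₁meas hV₁bd q hq hM4int hM4K hV₁sqint hV₁sqK hV₁int hV₁K hYint hYK
end
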